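/- arXiv:2402.18706 — 7 statements merged into one kernel-verified Lean document; each statement's English description precedes it below -/
import Mathlib

section
/- Under the running assumptions (Green upper bound via the Li–Yau integral, volume lower bound Vol(B_t(x₀)) ≥ α t^n/R^n for t ≤ R with R ≥ R₀, and the uniformity plus integrability conditions on f), for every x, x₀ with d(x,x₀) ≤ R and R ≥ R₀ one has G(x,x₀) ≤ (c₂/α)[R^n/(n−2) + γβ f(R) R^{n−1}] · d(x,x₀)^{−(n−2)}. -/
/-!
Split the Li–Yau integral `∫_d^∞ t / V(t) dt` at `R`. Below `R` the volume lower bound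
gives `t / V(t) ≤ (R^n / α) t^{1-n}`, whose integral over `(d, ∞)` is
`R^n / ((n-2) α d^{n-2})`. Above `R` the uniformity condition compares `t f(t) / V(t)` with
`R f(R) / V(R) ≤ R f(R) / α`, so `t / V(t) ≤ (γ R f(R) / α) / f(t)`, whose integral is at
most `γ R f(R) β / α`; finally `R ≤ R^{n-1} / d^{n-2}` because `d ≤ R`.
-/

open MeasureTheory Set

theorem div_le_mul_rpow_of_pow_div_le {n : ℕ} {t v α R : ℝ} (hα : 0 < α) (hR : 0 < R)
    (ht : 0 < t) (hv : α * t ^ n / R ^ n ≤ v) : t / v ≤ R ^ n / α * t ^ (1 - n : ℝ) := by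
  have hrpow : t ^ (1 - n : ℝ) = t / t ^ n := by
    rw [Real.rpow_sub ht, Real.rpow_one, Real.rpow_natCast]
  calc t / v ≤ t / (α * t ^ n / R ^ n) := by gcongr
    _ = R ^ n / α * t ^ (1 - n : ℝ) := by rw [hrpow]; field_simp

theorem one_sub_nat_lt_neg_one {n : ℕ} (hn : 3 ≤ n) : (1 - n : ℝ) < -1 := by
  have : (3 : ℝ) ≤ n := by exact_mod_cast hn
  linarith

theorem integral_Ioi_rpow_one_sub_nat {n : ℕ} (hn : 3 ≤ n) {d : ℝ} (hd : 0 < d) :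
    ∫ t in Ioi d, t ^ (1 - n : ℝ) = 1 / (((n : ℝ) - 2) * d ^ (n - 2)) := by
  have hexp : (1 - n + 1 : ℝ) = -((n - 2 : ℕ) : ℝ) := by
    push_cast [Nat.cast_sub (by omega : 2 ≤ n)]
    ring
  rw [integral_Ioi_rpow_of_lt (one_sub_nat_lt_neg_one hn) hd, hexp, Real.rpow_neg hd.le,
    Real.rpow_natCast, Nat.cast_sub (by omega : 2 ≤ n)]
  field_simp
  push_cast
  ring

section LiYauIntegral

variable {v f : ℝ → ℝ} {n : ℕ} {α γ R₀ R : ℝ}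

theorem div_le_of_uniform (hα : 0 < α) (hγ : 0 ≤ γ) (hR₀R : R₀ ≤ R) (hR : 0 < R)
    (hvR : α ≤ v R) (hf_pos : ∀ t, R₀ ≤ t → 0 < f t)
    (huniform : ∀ r s, R₀ ≤ r → r ≤ s → s * f s / v s ≤ γ * (r * f r / v r))
    {t : ℝ} (hRt : R ≤ t) : t / v t ≤ γ * R * f R / α * (1 / f t) := by
  have hft : 0 < f t := hf_pos t (hR₀R.trans hRt)
  have hfR : 0 < f R := hf_pos R hR₀R
  calc t / v t = t * f t / v t / f t := by field_simp
    _ ≤ γ * (R * f R / v R) / f t := by gcongr; exact huniform R t hR₀R hRt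
    _ ≤ γ * (R * f R / α) / f t := by gcongr
    _ = γ * R * f R / α * (1 / f t) := by ring

theorem div_le_rpow_add_indicator (hα : 0 < α) (hγ : 0 ≤ γ) (hR₀R : R₀ ≤ R) (hR : 0 < R)
    (hv_low : ∀ t, 0 < t → t ≤ R → α * t ^ n / R ^ n ≤ v t) (hf_pos : ∀ t, R₀ ≤ t → 0 < f t)
    (huniform : ∀ r s, R₀ ≤ r → r ≤ s → s * f s / v s ≤ γ * (r * f r / v r))
    {t : ℝ} (ht : 0 < t) :
    t / v t ≤ R ^ n / α * t ^ (1 - n : ℝ) +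
      γ * R * f R / α * (Ioi R).indicator (fun s => 1 / f s) t := by
  have hfR : 0 < f R := hf_pos R hR₀R
  by_cases htR : t ≤ R
  · have hmain := div_le_mul_rpow_of_pow_div_le hα hR ht (hv_low t ht htR)
    rw [indicator_of_notMem (by simpa using htR), mul_zero, add_zero]
    exact hmain
  · have hRt : R < t := not_le.mp htR
    have hvR : α ≤ v R := by simpa [hR.ne'] using hv_low R hR le_rfl
    have htail := div_le_of_uniform hα hγ hR₀R hR hvR hf_pos huniform hRt.le
    rw [indicator_of_mem (mem_Ioi.mpr hRt)]
    have hmain : 0 ≤ R ^ n / α * t ^ (1 - n : ℝ) := by positivity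
    linarith

theorem integral_Ioi_div_le (hn : 3 ≤ n) (hα : 0 < α) (hγ : 0 ≤ γ) (hR₀R : R₀ ≤ R)
    (hR : 0 < R) (hv_pos : ∀ t, 0 < t → 0 < v t)
    (hv_low : ∀ t, 0 < t → t ≤ R → α * t ^ n / R ^ n ≤ v t)
    (hf_pos : ∀ t, R₀ ≤ t → 0 < f t) (hf_int : IntegrableOn (fun t => 1 / f t) (Ioi R₀))
    (huniform : ∀ r s, R₀ ≤ r → r ≤ s → s * f s / v s ≤ γ * (r * f r / v r))
    {d : ℝ} (hd : 0 < d) :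
    ∫ t in Ioi d, t / v t ≤
      R ^ n / α * (1 / (((n : ℝ) - 2) * d ^ (n - 2))) +
        γ * R * f R / α * ∫ t in Ioi R₀, 1 / f t := by
  set tail : ℝ → ℝ := (Ioi R).indicator fun t => 1 / f t
  have hmain_int : IntegrableOn (fun t => R ^ n / α * t ^ (1 - n : ℝ)) (Ioi d) :=
    (integrableOn_Ioi_rpow_of_lt (one_sub_nat_lt_neg_one hn) hd).const_mul _
  have htail_int : IntegrableOn (fun t => γ * R * f R / α * tail t) (Ioi d) :=
    ((hf_int.mono_set (Ioi_subset_Ioi hR₀R)).integrable_indicator measurableSet_Ioi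
      |>.integrableOn).const_mul _
  have htail_le : ∫ t in Ioi d, tail t ≤ ∫ t in Ioi R₀, 1 / f t := by
    rw [setIntegral_indicator measurableSet_Ioi]
    refine setIntegral_mono_set hf_int ?_ ?_
    · filter_upwards [ae_restrict_mem measurableSet_Ioi] with t ht
      exact (one_div_pos.mpr (hf_pos t (le_of_lt ht))).le
    · exact (inter_subset_right.trans (Ioi_subset_Ioi hR₀R)).eventuallyLE
  have hfR : 0 < f R := hf_pos R hR₀R
  calc ∫ t in Ioi d, t / v t
      ≤ ∫ t in Ioi d, (R ^ n / α * t ^ (1 - n : ℝ) + γ * R * f R / α * tail t) := by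
        refine integral_mono_of_nonneg ?_ (hmain_int.add htail_int) ?_
        · filter_upwards [ae_restrict_mem measurableSet_Ioi] with t ht
          exact div_nonneg (hd.trans ht).le (hv_pos t (hd.trans ht)).le
        · filter_upwards [ae_restrict_mem measurableSet_Ioi] with t ht
          exact div_le_rpow_add_indicator hα hγ hR₀R hR hv_low hf_pos huniform (hd.trans ht)
    _ = R ^ n / α * (1 / (((n : ℝ) - 2) * d ^ (n - 2))) +
          γ * R * f R / α * ∫ t in Ioi d, tail t := by
        rw [integral_add hmain_int htail_int, integral_const_mul, integral_const_mul,
          integral_Ioi_rpow_one_sub_nat hn hd]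
    _ ≤ _ := by gcongr

end LiYauIntegral

theorem stmt_5_general {M : Type*} [MetricSpace M] (V : M → ℝ → ℝ) (G : M → M → ℝ)
    (f : ℝ → ℝ) (n : ℕ) (hn : 3 ≤ n) (c₂ γ β α R₀ : ℝ)
    (hc₂ : 0 < c₂) (hγ : 0 < γ) (hα : 0 < α)
    (hV_pos : ∀ x t, 0 < t → 0 < V x t)
    (hVlow : ∀ (x₀ : M) (t R : ℝ), R₀ ≤ R → 0 < t → t ≤ R → α * t ^ n / R ^ n ≤ V x₀ t)
    (hf_pos : ∀ t, R₀ ≤ t → 0 < f t)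
    (hf_int : MeasureTheory.IntegrableOn (fun t => 1 / f t) (Set.Ioi R₀))
    (hβ : β = ∫ t in Set.Ioi R₀, 1 / f t)
    (huniform : ∀ (x : M) (r R : ℝ), R₀ ≤ r → r ≤ R →
      R * f R / V x R ≤ γ * (r * f r / V x r))
    (hGreen : ∀ x x₀ : M, x ≠ x₀ →
      G x x₀ ≤ c₂ * ∫ t in Set.Ioi (dist x x₀), t / V x₀ t) :
    ∀ (x x₀ : M) (R : ℝ), x ≠ x₀ → R₀ ≤ R → dist x x₀ ≤ R →
      G x x₀ ≤ c₂ / α * (R ^ n / ((n : ℝ) - 2) + γ * β * f R * R ^ (n - 1)) /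
        (dist x x₀) ^ (n - 2) := by
  intro x x₀ R hx hR₀R hdR
  set d := dist x x₀
  have hd : 0 < d := dist_pos.mpr hx
  have hR : 0 < R := hd.trans_le hdR
  have hfR : 0 < f R := hf_pos R hR₀R
  have hβ_nonneg : 0 ≤ β := hβ ▸ setIntegral_nonneg measurableSet_Ioi fun t ht =>
    (one_div_pos.mpr (hf_pos t (le_of_lt ht))).le
  have hintegral := integral_Ioi_div_le hn hα hγ.le hR₀R hR (hV_pos x₀)
    (fun t ht htR => hVlow x₀ t R hR₀R ht htR) hf_pos hf_int (huniform x₀) hd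
  have hR_le : R ≤ R ^ (n - 1) / d ^ (n - 2) := by
    rw [le_div_iff₀ (by positivity), show n - 1 = n - 2 + 1 by omega, pow_succ']
    gcongr
  calc G x x₀ ≤ c₂ * ∫ t in Ioi d, t / V x₀ t := hGreen x x₀ hx
    _ ≤ c₂ * (R ^ n / α * (1 / (((n : ℝ) - 2) * d ^ (n - 2))) + γ * R * f R / α * β) := by
        rw [hβ]; exact mul_le_mul_of_nonneg_left hintegral hc₂.le
    _ ≤ c₂ * (R ^ n / α * (1 / (((n : ℝ) - 2) * d ^ (n - 2)))
          + γ * (R ^ (n - 1) / d ^ (n - 2)) * f R / α * β) := by gcongr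
    _ = c₂ / α * (R ^ n / ((n : ℝ) - 2) + γ * β * f R * R ^ (n - 1)) / d ^ (n - 2) := by
        field_simp

/-- Under the Green upper bound via the Li–Yau integral, the volume lower
bound `Vol(B_t(x₀)) ≥ α t^n/R^n` for `0 < t ≤ R`, `R ≥ R₀`, and the uniformity plus
integrability conditions on `f`, for every `x ≠ x₀` with `d(x,x₀) ≤ R`, `R ≥ R₀`:
`G(x,x₀) ≤ (c₂/α)[R^n/(n−2) + γβ f(R) R^{n−1}] · d(x,x₀)^{−(n−2)}`. -/
theorem stmt_5 {M : Type*} [MetricSpace M] (V : M → ℝ → ℝ) (G : M → M → ℝ)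
    (f : ℝ → ℝ) (n : ℕ) (hn : 3 ≤ n) (c₂ γ β α R₀ : ℝ)
    (hc₂ : 0 < c₂) (hγ : 0 < γ) (hα : 0 < α) (hR₀ : 1 ≤ R₀)
    (hV_pos : ∀ x t, 0 < t → 0 < V x t)
    (hVlow : ∀ (x₀ : M) (t R : ℝ), R₀ ≤ R → 0 < t → t ≤ R → α * t ^ n / R ^ n ≤ V x₀ t)
    (hf_pos : ∀ t, R₀ ≤ t → 0 < f t)
    (hf_mono : MonotoneOn f (Set.Ici R₀))
    (hf_int : MeasureTheory.IntegrableOn (fun t => 1 / f t) (Set.Ioi R₀))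
    (hβ : β = ∫ t in Set.Ioi R₀, 1 / f t)
    (huniform : ∀ (x : M) (r R : ℝ), R₀ ≤ r → r ≤ R →
      R * f R / V x R ≤ γ * (r * f r / V x r))
    (hGreen : ∀ x x₀ : M, x ≠ x₀ →
      G x x₀ ≤ c₂ * ∫ t in Set.Ioi (dist x x₀), t / V x₀ t) :
    ∀ (x x₀ : M) (R : ℝ), x ≠ x₀ → R₀ ≤ R → dist x x₀ ≤ R →
      G x x₀ ≤ c₂ / α * (R ^ n / ((n : ℝ) - 2) + γ * β * f R * R ^ (n - 1)) /
        (dist x x₀) ^ (n - 2) :=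
  stmt_5_general V G f n hn c₂ γ β α R₀ hc₂ hγ hα hV_pos hVlow hf_pos hf_int hβ huniform hGreen
end

section
/- Under the running assumptions, for every R ≥ R₀ and every x₀, ∫_{B_R(x₀)} G(x,x₀) dμ(x) ≤ c₂ max{γ, 1/2} · ( R f(R) ∫_R^∞ dt/f(t) + R² ). The proof uses the coarea formula, integration by parts, and the Green upper bound. -/
/-!
By the Green bound, `G(x, x₀) ≤ c₂ h(d(x, x₀))` off the null point `x₀`, where
`h(r) = ∫_r^∞ t / V(t) dt`. The coarea identity turns `∫_{B_R} h(d(x, x₀))` into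
`∫_0^R V'(r) h(r) dr`, and exchanging the order of integration (integration by parts without
boundary terms) evaluates this as `∫_0^R t dt + V(R) h(R) = R²/2 + V(R) h(R)`. Finally the
uniformity condition gives `t / V(t) ≤ γ R f(R) / (V(R) f(t))` for `t ≥ R`, so
`V(R) h(R) ≤ γ R f(R) ∫_R^∞ dt / f(t)`.
-/

open MeasureTheory Set
open scoped ENNReal

theorem lintegral_Ioc_mul_lintegral_Ici {μ ν : Measure ℝ} [SFinite μ] [SFinite ν]
    {σ q : ℝ → ℝ≥0∞} {a R : ℝ} (hσ : AEMeasurable σ (μ.restrict (Ioc a R)))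
    (hq : AEMeasurable q (ν.restrict (Ioi a))) :
    ∫⁻ r in Ioc a R, σ r * ∫⁻ t in Ici r, q t ∂ν ∂μ =
      ∫⁻ t in Ioi a, (∫⁻ r in Ioc a (min R t), σ r ∂μ) * q t ∂ν := by
  set F : ℝ → ℝ → ℝ≥0∞ := fun r t =>
    {p : ℝ × ℝ | p.1 ≤ p.2}.indicator (fun p => σ p.1 * q p.2) (r, t)
  have hF : AEMeasurable (Function.uncurry F)
      ((μ.restrict (Ioc a R)).prod (ν.restrict (Ioi a))) :=
    (hσ.comp_fst.mul hq.comp_snd).indicator (measurableSet_le measurable_fst measurable_snd)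
  calc ∫⁻ r in Ioc a R, σ r * ∫⁻ t in Ici r, q t ∂ν ∂μ
      = ∫⁻ r in Ioc a R, ∫⁻ t in Ioi a, F r t ∂ν ∂μ := by
        refine setLIntegral_congr_fun measurableSet_Ioc fun r hr => ?_
        have hF_r : (fun t => F r t) = (Ici r).indicator fun t => σ r * q t := by
          ext t; simp [F, indicator_apply]
        rw [hF_r, lintegral_indicator measurableSet_Ici,
          Measure.restrict_restrict measurableSet_Ici,
          inter_eq_left.2 (Ici_subset_Ioi.2 hr.1), lintegral_const_mul'' _
            (hq.mono_measure (Measure.restrict_mono (Ici_subset_Ioi.2 hr.1) le_rfl))]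
    _ = ∫⁻ t in Ioi a, ∫⁻ r in Ioc a R, F r t ∂μ ∂ν := lintegral_lintegral_swap hF
    _ = ∫⁻ t in Ioi a, (∫⁻ r in Ioc a (min R t), σ r ∂μ) * q t ∂ν := by
        refine lintegral_congr fun t => ?_
        have hF_t : (fun r => F r t) = (Iic t).indicator fun r => σ r * q t := by
          ext r; simp [F, indicator_apply]
        have hIoc : Iic t ∩ Ioc a R = Ioc a (min R t) := by
          ext r; simp only [mem_inter_iff, mem_Iic, mem_Ioc, le_min_iff]; tauto
        rw [hF_t, lintegral_indicator measurableSet_Iic,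
          Measure.restrict_restrict measurableSet_Iic, hIoc, lintegral_mul_const'' _
            (hσ.mono_measure
              (Measure.restrict_mono (Ioc_subset_Ioc_right (min_le_left _ _)) le_rfl))]

theorem aemeasurable_restrict_Ioi_of_forall_gt {β : Type*} [MeasurableSpace β]
    {μ : Measure ℝ} {g : ℝ → β} {a : ℝ}
    (hg : ∀ b, a < b → AEMeasurable g (μ.restrict (Ioi b))) :
    AEMeasurable g (μ.restrict (Ioi a)) := by
  have hIoi : Ioi a = ⋃ n : ℕ, Ioi (a + 1 / (n + 1)) := by
    ext t
    simp only [mem_Ioi, mem_iUnion]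
    refine ⟨fun ht => ?_, fun ⟨n, hn⟩ =>
      lt_trans (lt_add_of_pos_right a (by positivity)) hn⟩
    obtain ⟨n, hn⟩ := exists_nat_one_div_lt (sub_pos.2 ht)
    exact ⟨n, by linarith⟩
  rw [hIoi, aemeasurable_iUnion_iff]
  exact fun n => hg _ (lt_add_of_pos_right a (by positivity))

theorem lintegral_Ioc_ofReal_mul_integral_Ioi {s V q : ℝ → ℝ} {a R : ℝ} (haR : a < R)
    (hs_int : IntegrableOn s (Ioc a R)) (hs_nonneg : ∀ r ∈ Ioc a R, 0 ≤ s r)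
    (hsV : ∀ ρ ∈ Ioc a R, ∫ r in Ioc a ρ, s r = V ρ)
    (hq_int : ∀ r, a < r → IntegrableOn q (Ioi r)) (hq_nonneg : ∀ t, a < t → 0 ≤ q t)
    (hVq : IntegrableOn (fun t => V t * q t) (Ioc a R)) :
    ∫⁻ r in Ioc a R, ENNReal.ofReal (s r * ∫ t in Ioi r, q t) =
      ENNReal.ofReal ((∫ t in Ioc a R, V t * q t) + V R * ∫ t in Ioi R, q t) := by
  have hq_ae : ∀ r, a ≤ r → 0 ≤ᵐ[volume.restrict (Ioi r)] q := fun r hr =>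
    (ae_restrict_iff' measurableSet_Ioi).2 (ae_of_all _ fun t ht => hq_nonneg t (hr.trans_lt ht))
  have hV_nonneg : ∀ ρ ∈ Ioc a R, 0 ≤ V ρ := fun ρ hρ => hsV ρ hρ ▸
    setIntegral_nonneg measurableSet_Ioc fun r hr => hs_nonneg r ⟨hr.1, hr.2.trans hρ.2⟩
  have hVq_nonneg : ∀ t ∈ Ioc a R, 0 ≤ V t * q t := fun t ht =>
    mul_nonneg (hV_nonneg t ht) (hq_nonneg t ht.1)
  have hq_meas : AEMeasurable (fun t => ENNReal.ofReal (q t)) (volume.restrict (Ioi a)) :=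
    (aemeasurable_restrict_Ioi_of_forall_gt fun b hb => (hq_int b hb).aemeasurable).ennreal_ofReal
  calc ∫⁻ r in Ioc a R, ENNReal.ofReal (s r * ∫ t in Ioi r, q t)
      = ∫⁻ r in Ioc a R, ENNReal.ofReal (s r) * ∫⁻ t in Ici r, ENNReal.ofReal (q t) := by
        refine setLIntegral_congr_fun measurableSet_Ioc fun r hr => ?_
        rw [ENNReal.ofReal_mul (hs_nonneg r hr), setLIntegral_congr Ioi_ae_eq_Ici.symm,
          ofReal_integral_eq_lintegral_ofReal (hq_int r hr.1) (hq_ae r hr.1.le)]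
    _ = ∫⁻ t in Ioi a,
          (∫⁻ r in Ioc a (min R t), ENNReal.ofReal (s r)) * ENNReal.ofReal (q t) :=
        lintegral_Ioc_mul_lintegral_Ici hs_int.aemeasurable.ennreal_ofReal hq_meas
    _ = ∫⁻ t in Ioi a, ENNReal.ofReal (V (min R t) * q t) := by
        refine setLIntegral_congr_fun measurableSet_Ioi fun t ht => ?_
        have hmin : min R t ∈ Ioc a R := ⟨lt_min haR ht, min_le_left _ _⟩
        rw [← ofReal_integral_eq_lintegral_ofReal
            (hs_int.mono_set (Ioc_subset_Ioc_right hmin.2))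
            ((ae_restrict_iff' measurableSet_Ioc).2 (ae_of_all _ fun r hr =>
              hs_nonneg r ⟨hr.1, hr.2.trans hmin.2⟩)),
          hsV _ hmin, ENNReal.ofReal_mul (hV_nonneg _ hmin)]
    _ = (∫⁻ t in Ioc a R, ENNReal.ofReal (V t * q t)) +
          ∫⁻ t in Ioi R, ENNReal.ofReal (V R * q t) := by
        rw [← Ioc_union_Ioi_eq_Ioi haR.le,
          lintegral_union measurableSet_Ioi Ioc_disjoint_Ioi_same]
        refine congrArg₂ (· + ·) ?_ ?_
        · exact setLIntegral_congr_fun measurableSet_Ioc fun t ht => by rw [min_eq_right ht.2]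
        · exact setLIntegral_congr_fun measurableSet_Ioi fun t ht => by rw [min_eq_left ht.le]
    _ = ENNReal.ofReal ((∫ t in Ioc a R, V t * q t) + V R * ∫ t in Ioi R, q t) := by
        have hVR := hV_nonneg R ⟨haR, le_rfl⟩
        rw [ENNReal.ofReal_add (setIntegral_nonneg measurableSet_Ioc hVq_nonneg)
            (mul_nonneg hVR (setIntegral_nonneg_of_ae_restrict (hq_ae R haR.le))),
          ofReal_integral_eq_lintegral_ofReal hVq
            ((ae_restrict_iff' measurableSet_Ioc).2 (ae_of_all _ hVq_nonneg)),
          ← integral_const_mul, ofReal_integral_eq_lintegral_ofReal ((hq_int R haR).const_mul _)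
            ((hq_ae R haR.le).mono fun t ht => mul_nonneg hVR ht)]

theorem integral_Ioc_mul_integral_Ioi {s V q : ℝ → ℝ} {a R : ℝ} (haR : a < R)
    (hs_int : IntegrableOn s (Ioc a R)) (hs_nonneg : ∀ r ∈ Ioc a R, 0 ≤ s r)
    (hsV : ∀ ρ ∈ Ioc a R, ∫ r in Ioc a ρ, s r = V ρ)
    (hq_int : ∀ r, a < r → IntegrableOn q (Ioi r)) (hq_nonneg : ∀ t, a < t → 0 ≤ q t)
    (hVq : IntegrableOn (fun t => V t * q t) (Ioc a R)) :
    ∫ r in Ioc a R, s r * ∫ t in Ioi r, q t =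
      (∫ t in Ioc a R, V t * q t) + V R * ∫ t in Ioi R, q t := by
  have hq_ae : ∀ r, a < r → 0 ≤ᵐ[volume.restrict (Ioi r)] q := fun r hr =>
    (ae_restrict_iff' measurableSet_Ioi).2 (ae_of_all _ fun t ht => hq_nonneg t (hr.trans ht))
  have htail_anti : AntitoneOn (fun r => ∫ t in Ioi r, q t) (Ioc a R) := fun r hr r' _ hrr' =>
    setIntegral_mono_set (hq_int r hr.1) (hq_ae r hr.1) (Ioi_subset_Ioi hrr').eventuallyLE
  have hmeas : AEStronglyMeasurable (fun r => s r * ∫ t in Ioi r, q t)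
      (volume.restrict (Ioc a R)) :=
    (hs_int.aemeasurable.mul
      (aemeasurable_restrict_of_antitoneOn measurableSet_Ioc htail_anti)).aestronglyMeasurable
  have hnonneg : 0 ≤ᵐ[volume.restrict (Ioc a R)] fun r => s r * ∫ t in Ioi r, q t :=
    (ae_restrict_iff' measurableSet_Ioc).2 (ae_of_all _ fun r hr =>
      mul_nonneg (hs_nonneg r hr) (setIntegral_nonneg_of_ae_restrict (hq_ae r hr.1)))
  have hV_nonneg : ∀ ρ ∈ Ioc a R, 0 ≤ V ρ := fun ρ hρ => hsV ρ hρ ▸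
    setIntegral_nonneg measurableSet_Ioc fun r hr => hs_nonneg r ⟨hr.1, hr.2.trans hρ.2⟩
  rw [integral_eq_lintegral_of_nonneg_ae hnonneg hmeas,
    lintegral_Ioc_ofReal_mul_integral_Ioi haR hs_int hs_nonneg hsV hq_int hq_nonneg hVq,
    ENNReal.toReal_ofReal]
  exact add_nonneg (setIntegral_nonneg measurableSet_Ioc fun t ht =>
      mul_nonneg (hV_nonneg t ht) (hq_nonneg t ht.1))
    (mul_nonneg (hV_nonneg R ⟨haR, le_rfl⟩) (setIntegral_nonneg_of_ae_restrict (hq_ae R haR)))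

theorem integral_mono_ae_of_integral_nonneg {α : Type*} [MeasurableSpace α] {μ : Measure α}
    {f g : α → ℝ} (hg : Integrable g μ) (hg_nonneg : 0 ≤ ∫ x, g x ∂μ)
    (hfg : f ≤ᵐ[μ] g) :
    ∫ x, f x ∂μ ≤ ∫ x, g x ∂μ := by
  by_cases hf : Integrable f μ
  · exact integral_mono_ae hf hg hfg
  · rwa [integral_undef hf]

section Uniformity

variable {V f : ℝ → ℝ} {γ R₀ : ℝ}

theorem div_le_of_mul_div_le {t v φ C : ℝ} (hφ : 0 < φ) (h : t * φ / v ≤ C) :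
    t / v ≤ C * (1 / φ) := by
  rw [mul_one_div, le_div_iff₀ hφ]
  calc t / v * φ = t * φ / v := by ring
    _ ≤ C := h

theorem integrableOn_Ioi_div_of_uniform {r : ℝ} (hr : 0 < r) (hV_cont : ContinuousOn V (Ioi 0))
    (hV_pos : ∀ t, 0 < t → 0 < V t) (hf_pos : ∀ t, R₀ ≤ t → 0 < f t)
    (hf_int : IntegrableOn (fun t => 1 / f t) (Ioi R₀))
    (huniform : ∀ r t, R₀ ≤ r → r ≤ t → t * f t / V t ≤ γ * (r * f r / V r)) :
    IntegrableOn (fun t => t / V t) (Ioi r) := by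
  have hcont : ContinuousOn (fun t => t / V t) (Ioi 0) :=
    continuousOn_id.div hV_cont fun t ht => (hV_pos t ht).ne'
  rw [← Ioc_union_Ioi_eq_Ioi (le_max_left r R₀)]
  refine IntegrableOn.union ?_ ?_
  · exact ((hcont.mono fun t ht => hr.trans_le ht.1).integrableOn_Icc).mono_set
      Ioc_subset_Icc_self
  · refine Integrable.mono' ((hf_int.mono_set (Ioi_subset_Ioi (le_max_right r R₀))).const_mul
      (γ * (R₀ * f R₀ / V R₀)))
      ((hcont.mono fun t ht => hr.trans_le ((le_max_left r R₀).trans ht.le)).aestronglyMeasurable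
        measurableSet_Ioi) ((ae_restrict_iff' measurableSet_Ioi).2 (ae_of_all _ fun t ht => ?_))
    have hR₀t : R₀ ≤ t := (le_max_right r R₀).trans ht.le
    have ht0 : 0 < t := hr.trans_le ((le_max_left r R₀).trans ht.le)
    rw [Real.norm_of_nonneg (div_nonneg ht0.le (hV_pos t ht0).le)]
    exact div_le_of_mul_div_le (hf_pos t hR₀t) (huniform R₀ t le_rfl hR₀t)

theorem mul_integral_Ioi_div_le_of_uniform {R : ℝ} (hR₀R : R₀ ≤ R) (hR : 0 < R)
    (hV_cont : ContinuousOn V (Ioi 0)) (hV_pos : ∀ t, 0 < t → 0 < V t)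
    (hf_pos : ∀ t, R₀ ≤ t → 0 < f t) (hf_int : IntegrableOn (fun t => 1 / f t) (Ioi R₀))
    (huniform : ∀ r t, R₀ ≤ r → r ≤ t → t * f t / V t ≤ γ * (r * f r / V r)) :
    V R * ∫ t in Ioi R, t / V t ≤ γ * (R * f R) * ∫ t in Ioi R, 1 / f t := by
  have hVR := hV_pos R hR
  calc V R * ∫ t in Ioi R, t / V t
      ≤ V R * ∫ t in Ioi R, γ * (R * f R / V R) * (1 / f t) := by
        refine mul_le_mul_of_nonneg_left (setIntegral_mono_on
          (integrableOn_Ioi_div_of_uniform hR hV_cont hV_pos hf_pos hf_int huniform)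
          ((hf_int.mono_set (Ioi_subset_Ioi hR₀R)).const_mul _) measurableSet_Ioi
          fun t ht => ?_) hVR.le
        exact div_le_of_mul_div_le (hf_pos t (hR₀R.trans ht.le)) (huniform R t hR₀R ht.le)
    _ = γ * (R * f R) * ∫ t in Ioi R, 1 / f t := by
        rw [integral_const_mul]
        field_simp

theorem sq_div_two_add_mul_integral_Ioi_div_le {R : ℝ} (hR₀R : R₀ ≤ R) (hR : 0 < R)
    (hV_cont : ContinuousOn V (Ioi 0)) (hV_pos : ∀ t, 0 < t → 0 < V t)
    (hf_pos : ∀ t, R₀ ≤ t → 0 < f t) (hf_int : IntegrableOn (fun t => 1 / f t) (Ioi R₀))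
    (huniform : ∀ r t, R₀ ≤ r → r ≤ t → t * f t / V t ≤ γ * (r * f r / V r)) :
    R ^ 2 / 2 + V R * ∫ t in Ioi R, t / V t ≤
      max γ (1 / 2) * (R * f R * (∫ t in Ioi R, 1 / f t) + R ^ 2) := by
  have hI : 0 ≤ R * f R * ∫ t in Ioi R, 1 / f t := mul_nonneg (mul_nonneg hR.le
    (hf_pos R hR₀R).le) (setIntegral_nonneg measurableSet_Ioi fun t ht =>
      one_div_nonneg.2 (hf_pos t (hR₀R.trans ht.le)).le)
  linarith [mul_integral_Ioi_div_le_of_uniform hR₀R hR hV_cont hV_pos hf_pos hf_int huniform,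
    mul_le_mul_of_nonneg_right (le_max_left γ (1 / 2)) hI,
    mul_le_mul_of_nonneg_right (le_max_right γ (1 / 2)) (sq_nonneg R)]

end Uniformity

section Coarea

variable {M : Type*} [MetricSpace M] [MeasurableSpace M] {μ : Measure M} {x₀ : M}
  {V s : ℝ → ℝ} {R : ℝ}

theorem monotoneOn_of_eq_measure_ball (hV : ∀ r, 0 < r → V r = (μ (Metric.ball x₀ r)).toReal)
    (hV_pos : ∀ r, 0 < r → 0 < V r) : MonotoneOn V (Ioi 0) := fun a ha b hb hab => by
  rw [hV a ha, hV b hb]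
  exact ENNReal.toReal_mono (ENNReal.toReal_pos_iff.1 (hV b hb ▸ hV_pos b hb)).2.ne
    (measure_mono (Metric.ball_subset_ball hab))

theorem setIntegral_Ioc_eq_of_coarea (hV : V R = (μ (Metric.ball x₀ R)).toReal)
    (hcoarea : ∀ φ : ℝ → ℝ,
      ∫ x in Metric.ball x₀ R, φ (dist x x₀) ∂μ = ∫ r in Ioc 0 R, s r * φ r) :
    ∫ r in Ioc 0 R, s r = V R := by
  rw [hV, ← measureReal_def]
  simpa using (hcoarea fun _ => 1).symm

theorem measure_singleton_eq_zero_of_coarea [OpensMeasurableSpace M] (hR : 0 < R)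
    (hball : μ (Metric.ball x₀ R) ≠ ∞)
    (hcoarea : ∀ φ : ℝ → ℝ,
      ∫ x in Metric.ball x₀ R, φ (dist x x₀) ∂μ = ∫ r in Ioc 0 R, s r * φ r) :
    μ {x₀} = 0 := by
  have hind : (fun x => ({0} : Set ℝ).indicator (1 : ℝ → ℝ) (dist x x₀)) =
      ({x₀} : Set M).indicator 1 := by
    ext x
    by_cases hx : x = x₀ <;> simp [hx]
  have hrhs : ∫ r in Ioc 0 R, s r * ({0} : Set ℝ).indicator (1 : ℝ → ℝ) r = 0 :=
    (setIntegral_congr_fun (g := 0) measurableSet_Ioc fun r hr => by simp [hr.1.ne']).trans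
      (integral_zero' _ _)
  have h := hcoarea (({0} : Set ℝ).indicator 1)
  rw [hind, hrhs, integral_indicator_one (measurableSet_singleton x₀),
    measureReal_restrict_apply (measurableSet_singleton x₀),
    inter_eq_left.2 (singleton_subset_iff.2 (Metric.mem_ball_self hR))] at h
  exact (measureReal_eq_zero_iff (measure_ne_top_of_subset
    (singleton_subset_iff.2 (Metric.mem_ball_self hR)) hball)).1 h

theorem setIntegral_ball_integral_Ioi_div_eq (hR : 0 < R) (hV_pos : ∀ t, 0 < t → 0 < V t)
    (hs_nonneg : ∀ r, 0 < r → 0 ≤ s r)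
    (hsV : ∀ ρ, 0 < ρ → ∫ r in Ioc 0 ρ, s r = V ρ)
    (hq_int : ∀ r, 0 < r → IntegrableOn (fun t => t / V t) (Ioi r))
    (hcoarea : ∀ φ : ℝ → ℝ,
      ∫ x in Metric.ball x₀ R, φ (dist x x₀) ∂μ = ∫ r in Ioc 0 R, s r * φ r) :
    ∫ x in Metric.ball x₀ R, (∫ t in Ioi (dist x x₀), t / V t) ∂μ =
      R ^ 2 / 2 + V R * ∫ t in Ioi R, t / V t := by
  -- `∫ s ≠ 0` forces integrability, since Bochner integrals of non-integrable functions are `0`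
  have hs_int : IntegrableOn s (Ioc 0 R) := Integrable.of_integral_ne_zero <| by
    rw [hsV R hR]; exact (hV_pos R hR).ne'
  have hVq : EqOn (fun t => V t * (t / V t)) id (Ioc 0 R) := fun t ht =>
    mul_div_cancel₀ t (hV_pos t ht.1).ne'
  rw [hcoarea fun r => ∫ t in Ioi r, t / V t,
    integral_Ioc_mul_integral_Ioi hR hs_int (fun r hr => hs_nonneg r hr.1)
      (fun ρ hρ => hsV ρ hρ.1) hq_int (fun t ht => div_nonneg ht.le (hV_pos t ht).le)
      ((continuous_id.integrableOn_Ioc).congr_fun hVq.symm measurableSet_Ioc),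
    setIntegral_congr_fun measurableSet_Ioc hVq, ← intervalIntegral.integral_of_le hR.le]
  simp [integral_id]

end Coarea

theorem stmt_6_general {M : Type*} [MetricSpace M] [MeasurableSpace M] [BorelSpace M]
    (μ : MeasureTheory.Measure M) (V s : M → ℝ → ℝ) (G : M → M → ℝ)
    (f : ℝ → ℝ) (c₂ γ R₀ : ℝ) (hc₂ : 0 < c₂) (hR₀ : 1 ≤ R₀)
    (hV : ∀ (x₀ : M) (r : ℝ), 0 < r → V x₀ r = (μ (Metric.ball x₀ r)).toReal)
    (hV_pos : ∀ x t, 0 < t → 0 < V x t)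
    (hs : ∀ (x₀ : M) (r : ℝ), 0 < r → HasDerivAt (V x₀) (s x₀ r) r)
    (hcoarea : ∀ (x₀ : M) (R : ℝ) (φ : ℝ → ℝ), 0 < R →
      (∫ x in Metric.ball x₀ R, φ (dist x x₀) ∂μ) = ∫ r in Set.Ioc 0 R, s x₀ r * φ r)
    (hf_pos : ∀ t, R₀ ≤ t → 0 < f t)
    (hf_int : MeasureTheory.IntegrableOn (fun t => 1 / f t) (Set.Ioi R₀))
    (huniform : ∀ (x : M) (r R : ℝ), R₀ ≤ r → r ≤ R →
      R * f R / V x R ≤ γ * (r * f r / V x r))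
    (hGreen : ∀ x x₀ : M, x ≠ x₀ →
      G x x₀ ≤ c₂ * ∫ t in Set.Ioi (dist x x₀), t / V x₀ t) :
    ∀ (x₀ : M) (R : ℝ), R₀ ≤ R →
      (∫ x in Metric.ball x₀ R, G x x₀ ∂μ) ≤
        c₂ * max γ (1 / 2) * (R * f R * (∫ t in Set.Ioi R, 1 / f t) + R ^ 2) := by
  intro x₀ R hR₀R
  have hR : 0 < R := by linarith
  have hV_cont : ContinuousOn (V x₀) (Ioi 0) := fun t ht =>
    (hs x₀ t ht).continuousAt.continuousWithinAt
  have hV_mono := monotoneOn_of_eq_measure_ball (hV x₀) (hV_pos x₀)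
  set tail : ℝ → ℝ := fun r => ∫ t in Ioi r, t / V x₀ t
  have hball_tail :
      ∫ x in Metric.ball x₀ R, tail (dist x x₀) ∂μ = R ^ 2 / 2 + V x₀ R * tail R :=
    setIntegral_ball_integral_Ioi_div_eq hR (hV_pos x₀)
      (fun r hr => (hs x₀ r hr).hasDerivWithinAt.nonneg_of_monotoneOn
        (isOpen_Ioi.preperfect r hr) hV_mono)
      (fun ρ hρ => setIntegral_Ioc_eq_of_coarea (hV x₀ ρ hρ) fun φ => hcoarea x₀ ρ φ hρ)
      (fun r hr => integrableOn_Ioi_div_of_uniform hr hV_cont (hV_pos x₀) hf_pos hf_int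
        (huniform x₀)) fun φ => hcoarea x₀ R φ hR
  have hball_tail_pos : 0 < R ^ 2 / 2 + V x₀ R * tail R := add_pos_of_pos_of_nonneg
    (by positivity) (mul_nonneg (hV_pos x₀ R hR).le (setIntegral_nonneg measurableSet_Ioi
      fun t ht => div_nonneg (hR.trans ht).le (hV_pos x₀ t (hR.trans ht)).le))
  have hG_le :
      ∀ᵐ x ∂μ.restrict (Metric.ball x₀ R), G x x₀ ≤ c₂ * tail (dist x x₀) :=
    ae_restrict_of_ae <| (measure_eq_zero_iff_ae_notMem.1 <| measure_singleton_eq_zero_of_coarea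
      hR (ENNReal.toReal_pos_iff.1 (hV x₀ R hR ▸ hV_pos x₀ R hR)).2.ne
      fun φ => hcoarea x₀ R φ hR).mono fun x hx => hGreen x x₀ hx
  calc ∫ x in Metric.ball x₀ R, G x x₀ ∂μ
      ≤ ∫ x in Metric.ball x₀ R, c₂ * tail (dist x x₀) ∂μ := by
        refine integral_mono_ae_of_integral_nonneg
          ((Integrable.of_integral_ne_zero ?_).const_mul c₂) ?_ hG_le
        · rw [hball_tail]; exact hball_tail_pos.ne'
        · rw [integral_const_mul, hball_tail]; exact mul_nonneg hc₂.le hball_tail_pos.le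
    _ = c₂ * (R ^ 2 / 2 + V x₀ R * tail R) := by rw [integral_const_mul, hball_tail]
    _ ≤ c₂ * max γ (1 / 2) * (R * f R * (∫ t in Ioi R, 1 / f t) + R ^ 2) := by
        rw [mul_assoc]
        exact mul_le_mul_of_nonneg_left (sq_div_two_add_mul_integral_Ioi_div_le hR₀R hR hV_cont
          (hV_pos x₀) hf_pos hf_int (huniform x₀)) hc₂.le

/-- Under the Green upper bound via the Li–Yau integral, the uniformity and
integrability conditions on `f`, and the coarea identity (assumed as a hypothesis, with
surface measure `s x₀ r = (d/dr)Vol(B_r(x₀))`), for every `R ≥ R₀` and every `x₀`: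
`∫_{B_R(x₀)} G(x,x₀) dμ(x) ≤ c₂ max{γ,1/2} (R f(R) ∫_R^∞ dt/f(t) + R²)`. -/
theorem stmt_6 {M : Type*} [MetricSpace M] [MeasurableSpace M] [BorelSpace M]
    (μ : MeasureTheory.Measure M) (V s : M → ℝ → ℝ) (G : M → M → ℝ)
    (f : ℝ → ℝ) (c₂ γ R₀ : ℝ) (hc₂ : 0 < c₂) (hγ : 0 < γ) (hR₀ : 1 ≤ R₀)
    (hV : ∀ (x₀ : M) (r : ℝ), 0 < r → V x₀ r = (μ (Metric.ball x₀ r)).toReal)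
    (hV_pos : ∀ x t, 0 < t → 0 < V x t)
    (hs : ∀ (x₀ : M) (r : ℝ), 0 < r → HasDerivAt (V x₀) (s x₀ r) r)
    (hcoarea : ∀ (x₀ : M) (R : ℝ) (φ : ℝ → ℝ), 0 < R →
      (∫ x in Metric.ball x₀ R, φ (dist x x₀) ∂μ) = ∫ r in Set.Ioc 0 R, s x₀ r * φ r)
    (hf_pos : ∀ t, R₀ ≤ t → 0 < f t)
    (hf_mono : MonotoneOn f (Set.Ici R₀))
    (hf_int : MeasureTheory.IntegrableOn (fun t => 1 / f t) (Set.Ioi R₀))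
    (huniform : ∀ (x : M) (r R : ℝ), R₀ ≤ r → r ≤ R →
      R * f R / V x R ≤ γ * (r * f r / V x r))
    (hGreen : ∀ x x₀ : M, x ≠ x₀ →
      G x x₀ ≤ c₂ * ∫ t in Set.Ioi (dist x x₀), t / V x₀ t) :
    ∀ (x₀ : M) (R : ℝ), R₀ ≤ R →
      (∫ x in Metric.ball x₀ R, G x x₀ ∂μ) ≤
        c₂ * max γ (1 / 2) * (R * f R * (∫ t in Set.Ioi R, 1 / f t) + R ^ 2) :=
  stmt_6_general μ V s G f c₂ γ R₀ hc₂ hR₀ hV hV_pos hs hcoarea hf_pos hf_int huniform hGreen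
end

section
/- Assume the heat kernel bound K(x,y,t) ≤ Ĉ/φ(t) where φ(t) = t^{n/2} for 0 < t < R₀² and φ(t) = √t · f(√t) for t ≥ R₀², with ∫_{R₀}^∞ ds/f(s) = β < ∞. Then the operator (−Δ)^{−1}u = ∫_0^∞ T_t u dt maps L¹ ∩ L^∞ continuously into L^∞, with ‖(−Δ)^{−1}u‖_∞ ≤ max{R₀², 2βĈ}(‖u‖_∞ + ‖u‖₁), and ∫_0^r T_t u dt converges to (−Δ)^{−1}u in L^∞ as r → ∞. -/
open MeasureTheory Set Filter

/-!
Split `∫_0^∞ T_t u dt` at `R₀²`. On `(0, R₀²]` the contraction bound gives at most `R₀² ‖u‖_∞`.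
On `(R₀², ∞)` the kernel bound is dominated by `g(t) = Ĉ ‖u‖₁ / (√t f(√t))`, and the substitution
`t = s²` turns `∫_{R₀²}^∞ g` into `2 Ĉ ‖u‖₁ ∫_{R₀}^∞ ds / f(s) = 2βĈ ‖u‖₁`. Since `g` does not
depend on the point `x`, the tails `∫_r^∞ T_t u dt` are bounded uniformly in `x` by the tails of the
integrable function `g`, which gives the convergence in `L^∞`.
-/

section SqrtSubstitution

variable {h : ℝ → ℝ} {a : ℝ}

lemma image_sq_Ioi (ha : 0 ≤ a) : (fun s : ℝ => s ^ 2) '' Ioi a = Ioi (a ^ 2) := by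
  ext y
  constructor
  · rintro ⟨s, hs, rfl⟩
    exact pow_lt_pow_left₀ hs ha two_ne_zero
  · intro hy
    exact ⟨√y, (Real.lt_sqrt ha).2 hy, Real.sq_sqrt ((sq_nonneg a).trans hy.le)⟩

lemma hasDerivWithinAt_sq_Ioi :
    ∀ x ∈ Ioi a, HasDerivWithinAt (fun s : ℝ => s ^ 2) (2 * x) (Ioi a) x :=
  fun x _ => by simpa using (hasDerivAt_pow 2 x).hasDerivWithinAt

lemma injOn_sq_Ioi (ha : 0 ≤ a) : InjOn (fun s : ℝ => s ^ 2) (Ioi a) :=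
  StrictMonoOn.injOn fun _ hx _ _ hxy => pow_lt_pow_left₀ hxy (ha.trans hx.le) two_ne_zero

lemma eqOn_abs_two_mul_smul_comp_sqrt_div_sqrt (ha : 0 ≤ a) :
    EqOn (fun x => |2 * x| • (h √(x ^ 2) / √(x ^ 2))) (fun x => 2 * h x) (Ioi a) := by
  intro x hx
  have hx0 : 0 < x := ha.trans_lt hx
  simp only [smul_eq_mul, Real.sqrt_sq hx0.le, abs_of_pos (mul_pos two_pos hx0)]
  field_simp

lemma integrableOn_comp_sqrt_div_sqrt_Ioi (ha : 0 ≤ a) (hh : IntegrableOn h (Ioi a)) :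
    IntegrableOn (fun t => h √t / √t) (Ioi (a ^ 2)) := by
  rw [← image_sq_Ioi ha, integrableOn_image_iff_integrableOn_abs_deriv_smul measurableSet_Ioi
    hasDerivWithinAt_sq_Ioi (injOn_sq_Ioi ha)]
  exact IntegrableOn.congr_fun (hh.const_mul 2)
    (eqOn_abs_two_mul_smul_comp_sqrt_div_sqrt ha).symm measurableSet_Ioi

lemma integral_comp_sqrt_div_sqrt_Ioi (ha : 0 ≤ a) :
    ∫ t in Ioi (a ^ 2), h √t / √t = 2 * ∫ s in Ioi a, h s := by
  rw [← image_sq_Ioi ha, integral_image_eq_integral_abs_deriv_smul measurableSet_Ioi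
    hasDerivWithinAt_sq_Ioi (injOn_sq_Ioi ha),
    setIntegral_congr_fun measurableSet_Ioi (eqOn_abs_two_mul_smul_comp_sqrt_div_sqrt ha),
    integral_const_mul]

end SqrtSubstitution

section DominatedOnHalfLine

variable {F g : ℝ → ℝ} {a C : ℝ}

lemma integrableOn_Ioi_zero_of_abs_le (ha : 0 ≤ a)
    (hFm : AEStronglyMeasurable F (volume.restrict (Ioi 0)))
    (hC : ∀ t ∈ Ioc 0 a, |F t| ≤ C) (hg : IntegrableOn g (Ioi a))
    (hFg : ∀ t ∈ Ioi a, |F t| ≤ g t) :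
    IntegrableOn F (Ioi 0) := by
  rw [← Ioc_union_Ioi_eq_Ioi ha]
  refine IntegrableOn.union ?_ ?_
  · refine Integrable.mono' (integrableOn_const (C := C) measure_Ioc_lt_top.ne)
      (hFm.mono_measure (Measure.restrict_mono Ioc_subset_Ioi_self le_rfl)) ?_
    filter_upwards [ae_restrict_mem measurableSet_Ioc] with t ht
    rw [Real.norm_eq_abs]
    exact hC t ht
  · refine Integrable.mono' hg
      (hFm.mono_measure (Measure.restrict_mono (Ioi_subset_Ioi ha) le_rfl)) ?_
    filter_upwards [ae_restrict_mem measurableSet_Ioi] with t ht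
    rw [Real.norm_eq_abs]
    exact hFg t ht

lemma abs_integral_Ioi_zero_le (ha : 0 ≤ a) (hF : IntegrableOn F (Ioi 0))
    (hC : ∀ t ∈ Ioc 0 a, |F t| ≤ C) (hg : IntegrableOn g (Ioi a))
    (hFg : ∀ t ∈ Ioi a, |F t| ≤ g t) :
    |∫ t in Ioi 0, F t| ≤ a * C + ∫ t in Ioi a, g t := by
  have hsplit : ∫ t in Ioi 0, F t = (∫ t in Ioc 0 a, F t) + ∫ t in Ioi a, F t := by
    rw [← intervalIntegral.integral_of_le ha,
      intervalIntegral.integral_interval_add_Ioi hF (hF.mono_set (Ioi_subset_Ioi ha))]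
  have hsmall : |∫ t in Ioc 0 a, F t| ≤ a * C := by
    simpa [Real.volume_Ioc, ha, mul_comm] using
      norm_setIntegral_le_of_norm_le_const (μ := volume) (f := F) measure_Ioc_lt_top
        fun t ht => (Real.norm_eq_abs _).trans_le (hC t ht)
  have hlarge : |∫ t in Ioi a, F t| ≤ ∫ t in Ioi a, g t := by
    simpa only [Real.norm_eq_abs] using norm_integral_le_of_norm_le (f := F) hg
      ((ae_restrict_mem measurableSet_Ioi).mono fun t ht =>
        (Real.norm_eq_abs _).trans_le (hFg t ht))
  rw [hsplit]
  exact (abs_add_le _ _).trans (add_le_add hsmall hlarge)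

lemma tendsto_integral_Ioi_atTop (hg : IntegrableOn g (Ioi a)) :
    Tendsto (fun r => ∫ t in Ioi r, g t) atTop (nhds 0) := by
  have h := tendsto_setIntegral_of_antitone (fun _ => measurableSet_Ioi) antitone_Ioi ⟨a, hg⟩
  rwa [iInter_eq_empty_iff.2 fun t => ⟨t + 1, by simp⟩, Measure.restrict_empty,
    integral_zero_measure] at h

lemma tendsto_iSup_abs_integral_Ioc_sub_integral_Ioi {ι : Type*} {F : ι → ℝ → ℝ}
    (hF : ∀ i, IntegrableOn (F i) (Ioi 0)) (hg : IntegrableOn g (Ioi a))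
    (hFg : ∀ i, ∀ t ∈ Ioi a, |F i t| ≤ g t) :
    Tendsto (fun r => ⨆ i, |(∫ t in Ioc 0 r, F i t) - ∫ t in Ioi 0, F i t|) atTop (nhds 0) := by
  have hg_abs : IntegrableOn (fun t => |g t|) (Ioi a) := hg.abs
  refine squeeze_zero' (Eventually.of_forall fun r => Real.iSup_nonneg fun i => abs_nonneg _) ?_
    (tendsto_integral_Ioi_atTop hg_abs)
  filter_upwards [eventually_ge_atTop a, eventually_ge_atTop 0] with r har hr
  refine Real.iSup_le (fun i => ?_) (setIntegral_nonneg measurableSet_Ioi fun t _ => abs_nonneg _)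
  have htail : (∫ t in Ioc 0 r, F i t) - ∫ t in Ioi 0, F i t = -∫ t in Ioi r, F i t := by
    rw [← intervalIntegral.integral_of_le hr,
      ← intervalIntegral.integral_interval_add_Ioi (hF i) ((hF i).mono_set (Ioi_subset_Ioi hr))]
    ring
  rw [htail, abs_neg]
  exact norm_integral_le_of_norm_le (hg_abs.mono_set (Ioi_subset_Ioi har))
    ((ae_restrict_mem measurableSet_Ioi).mono fun t ht =>
      (Real.norm_eq_abs _).trans_le ((hFg i t (har.trans_lt ht)).trans (le_abs_self _)))

end DominatedOnHalfLine

theorem stmt_9_general {M : Type*} (T : ℝ → (M → ℝ) → M → ℝ) (u : M → ℝ)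
    (f : ℝ → ℝ) (Chat R₀ β NuInf Nu1 : ℝ)
    (hR₀ : 1 ≤ R₀) (hNuInf : 0 ≤ NuInf) (hNu1 : 0 ≤ Nu1)
    (hf_int : MeasureTheory.IntegrableOn (fun t => 1 / f t) (Set.Ioi R₀))
    (hβ : β = ∫ t in Set.Ioi R₀, 1 / f t)
    (hmeas : ∀ x : M, Measurable (fun t => T t u x))
    (hsup : ∀ t : ℝ, 0 < t → ∀ x : M, |T t u x| ≤ NuInf)
    (hkernel_large : ∀ t : ℝ, R₀ ^ 2 ≤ t → ∀ x : M,
      |T t u x| ≤ Chat / (Real.sqrt t * f (Real.sqrt t)) * Nu1) :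
    (∀ x : M, MeasureTheory.IntegrableOn (fun t => T t u x) (Set.Ioi 0)) ∧
    (∀ x : M, |∫ t in Set.Ioi 0, T t u x| ≤ max (R₀ ^ 2) (2 * β * Chat) * (NuInf + Nu1)) ∧
    Tendsto (fun r : ℝ => ⨆ x : M,
        |(∫ t in Set.Ioc 0 r, T t u x) - ∫ t in Set.Ioi 0, T t u x|)
      atTop (nhds 0) := by
  have hR₀0 : 0 ≤ R₀ := zero_le_one.trans hR₀
  set g : ℝ → ℝ := fun t => Chat / (√t * f √t) * Nu1
  have hg_eq : g = fun t => Chat * Nu1 * ((fun s => 1 / f s) √t / √t) := by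
    funext t; simp only [g]; ring
  have hg_int : IntegrableOn g (Ioi (R₀ ^ 2)) :=
    hg_eq ▸ (integrableOn_comp_sqrt_div_sqrt_Ioi hR₀0 hf_int).const_mul _
  have hg_integral : ∫ t in Ioi (R₀ ^ 2), g t = 2 * β * Chat * Nu1 := by
    rw [hg_eq, integral_const_mul, integral_comp_sqrt_div_sqrt_Ioi (h := fun s => 1 / f s) hR₀0, hβ]
    ring
  have hC : ∀ x, ∀ t ∈ Ioc 0 (R₀ ^ 2), |T t u x| ≤ NuInf := fun x t ht => hsup t ht.1 x
  have hTg : ∀ x, ∀ t ∈ Ioi (R₀ ^ 2), |T t u x| ≤ g t := fun x t ht => hkernel_large t ht.le x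
  have hT_int : ∀ x, IntegrableOn (fun t => T t u x) (Ioi 0) := fun x =>
    integrableOn_Ioi_zero_of_abs_le (sq_nonneg R₀) (hmeas x).aestronglyMeasurable (hC x) hg_int
      (hTg x)
  refine ⟨hT_int, fun x => ?_,
    tendsto_iSup_abs_integral_Ioc_sub_integral_Ioi hT_int hg_int hTg⟩
  calc |∫ t in Ioi 0, T t u x| ≤ R₀ ^ 2 * NuInf + 2 * β * Chat * Nu1 :=
        hg_integral ▸ abs_integral_Ioi_zero_le (sq_nonneg R₀) (hT_int x) (hC x) hg_int (hTg x)
    _ ≤ max (R₀ ^ 2) (2 * β * Chat) * (NuInf + Nu1) := by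
        nlinarith [le_max_left (R₀ ^ 2) (2 * β * Chat), le_max_right (R₀ ^ 2) (2 * β * Chat)]

/-- assume the heat semigroup bounds `‖T_t u‖_∞ ≤ ‖u‖_∞` and
`‖T_t u‖_∞ ≤ Chat/φ(t) ‖u‖₁` with `φ(t) = t^{n/2}` for `0 < t < R₀²` and
`φ(t) = √t f(√t)` for `t ≥ R₀²`, and `β = ∫_{R₀}^∞ ds/f(s) < ∞`. Then
`(−Δ)⁻¹u = ∫_0^∞ T_t u dt` is well defined with
`‖(−Δ)⁻¹u‖_∞ ≤ max{R₀², 2βChat}(‖u‖_∞ + ‖u‖₁)`, and `∫_0^r T_t u dt → (−Δ)⁻¹u` in `L^∞`. -/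
theorem stmt_9 {M : Type*} (T : ℝ → (M → ℝ) → M → ℝ) (u : M → ℝ)
    (f : ℝ → ℝ) (n : ℕ) (hn : 3 ≤ n) (Chat R₀ β NuInf Nu1 : ℝ)
    (hChat : 0 < Chat) (hR₀ : 1 ≤ R₀) (hNuInf : 0 ≤ NuInf) (hNu1 : 0 ≤ Nu1)
    (hf_pos : ∀ t, R₀ ≤ t → 0 < f t)
    (hf_mono : MonotoneOn f (Set.Ici R₀))
    (hf_int : MeasureTheory.IntegrableOn (fun t => 1 / f t) (Set.Ioi R₀))
    (hβ : β = ∫ t in Set.Ioi R₀, 1 / f t)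
    (hmeas : ∀ x : M, Measurable (fun t => T t u x))
    (hsup : ∀ t : ℝ, 0 < t → ∀ x : M, |T t u x| ≤ NuInf)
    (hkernel_small : ∀ t : ℝ, 0 < t → t < R₀ ^ 2 → ∀ x : M,
      |T t u x| ≤ Chat / t ^ ((n : ℝ) / 2) * Nu1)
    (hkernel_large : ∀ t : ℝ, R₀ ^ 2 ≤ t → ∀ x : M,
      |T t u x| ≤ Chat / (Real.sqrt t * f (Real.sqrt t)) * Nu1) :
    (∀ x : M, MeasureTheory.IntegrableOn (fun t => T t u x) (Set.Ioi 0)) ∧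
    (∀ x : M, |∫ t in Set.Ioi 0, T t u x| ≤ max (R₀ ^ 2) (2 * β * Chat) * (NuInf + Nu1)) ∧
    Tendsto (fun r : ℝ => ⨆ x : M,
        |(∫ t in Set.Ioc 0 r, T t u x) - ∫ t in Set.Ioi 0, T t u x|)
      atTop (nhds 0) :=
  stmt_9_general T u f Chat R₀ β NuInf Nu1 hR₀ hNuInf hNu1 hf_int hβ hmeas hsup hkernel_large
end

section
/- Under the running assumptions (Ric ≥ 0, non-collapsing, uniformity and integrability of f), the strict inclusion L¹(M) ⊊ L¹_G(M) holds: there exists a nonnegative bounded measurable function v on M with ∫_M v dμ = +∞ but sup_{x₀∈M} ‖v‖_{L¹_{x₀,G}} < ∞. Such v can be taken of the form v = Σ_j χ_{B_1(o_j)} for a sufficiently separated sequence of centers o_j. -/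
/-!
Put unit balls `B j = ball (o j) 1` around far apart centres and let
`v = ∑ j, μ (B j)⁻¹ • 𝟙_{B j}`; every ball carries mass one, so `∫ v = ∞`, while non-collapsing
keeps `v ≤ α⁻¹`. Non-collapsing and uniformity bound `t / μ (ball x₀ t)` on `(1, ∞)` by one
integrable majorant `h`, independent of `x₀`, so the Li–Yau upper bound gives
`G x x₀ ≤ c₂ ∫_{(r, ∞)} h` as soon as `1 ≤ r ≤ dist x x₀`. Choose `s j ≥ 1` with
`∫_{(s j, ∞)} h ≤ 2⁻ʲ` and the centres `(s j + 1)`-separated: then, for every `x₀`, all balls but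
at most one stay at distance `≥ s j` from `x₀`, and the weighted norm of `v` is at most
`1 + c₂ ∫_{(1, ∞)} h + 2 c₂`.
-/

open MeasureTheory Set ENNReal

open Filter Topology Metric Function

theorem tendsto_setIntegral_Ioi_atTop {f : ℝ → ℝ} {a : ℝ} (hf : IntegrableOn f (Ioi a)) :
    Tendsto (fun r => ∫ t in Ioi r, f t) atTop (𝓝 0) := by
  have hempty : ⋂ r : ℝ, Ioi r = ∅ :=
    iInter_eq_empty_iff.2 fun t => ⟨t, lt_irrefl t⟩
  simpa [hempty] using
    tendsto_setIntegral_of_antitone (fun _ => measurableSet_Ioi) antitone_Ioi ⟨a, hf⟩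

theorem exists_one_le_setIntegral_Ioi_le {f : ℝ → ℝ} {a ε : ℝ} (hf : IntegrableOn f (Ioi a))
    (hε : 0 < ε) : ∃ r, 1 ≤ r ∧ ∫ t in Ioi r, f t ≤ ε :=
  (((tendsto_setIntegral_Ioi_atTop hf).eventually (Iic_mem_nhds hε)).and
    (eventually_ge_atTop 1)).exists.imp fun _ h => ⟨h.2, h.1⟩

theorem setIntegral_Ioi_le_of_le {φ h : ℝ → ℝ} {a r d : ℝ} (hh : IntegrableOn h (Ioi a))
    (hφ : ∀ t, a < t → 0 ≤ φ t) (hφh : ∀ t, a < t → φ t ≤ h t) (har : a ≤ r) (hrd : r ≤ d) :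
    ∫ t in Ioi d, φ t ≤ ∫ t in Ioi r, h t := by
  have had : Ioi d ⊆ Ioi a := Ioi_subset_Ioi (har.trans hrd)
  calc ∫ t in Ioi d, φ t ≤ ∫ t in Ioi d, h t :=
        integral_mono_of_nonneg ((ae_restrict_iff' measurableSet_Ioi).2 <| .of_forall
          fun t ht => hφ t (had ht)) (hh.mono_set had) ((ae_restrict_iff' measurableSet_Ioi).2 <|
          .of_forall fun t ht => hφh t (had ht))
    _ ≤ ∫ t in Ioi r, h t :=
        setIntegral_mono_set (hh.mono_set (Ioi_subset_Ioi har))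
          ((ae_restrict_iff' measurableSet_Ioi).2 <| .of_forall fun t ht =>
            (hφ t (har.trans_lt ht)).trans (hφh t (har.trans_lt ht)))
          (Ioi_subset_Ioi hrd).eventuallyLE

/-- Majorant of `t ↦ t / μ (ball x₀ t)` on `(1, ∞)`, uniform in `x₀`: non-collapsing below `R₀`,
the uniformity assumption at scale `R₀` above it. -/
noncomputable def liYauMajorant (α γ R₀ : ℝ) (f : ℝ → ℝ) (t : ℝ) : ℝ :=
  if t ≤ R₀ then R₀ / α else γ * (R₀ * f R₀ / α) * (1 / f t)

theorem integrableOn_liYauMajorant {α γ R₀ : ℝ} {f : ℝ → ℝ} (hR₀ : 1 ≤ R₀)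
    (hf : IntegrableOn (fun t => 1 / f t) (Ioi R₀)) :
    IntegrableOn (liYauMajorant α γ R₀ f) (Ioi 1) := by
  rw [← Ioc_union_Ioi_eq_Ioi hR₀]
  refine IntegrableOn.union ?_ ?_
  · exact (integrableOn_const measure_Ioc_lt_top.ne).congr_fun
      (fun t ht => (if_pos ht.2).symm) measurableSet_Ioc
  · exact IntegrableOn.congr_fun (hf.const_mul _) (fun t ht => (if_neg (not_le.2 ht)).symm)
      measurableSet_Ioi

section LiYau

variable {M : Type*} [MetricSpace M] [MeasurableSpace M] {μ : Measure M} {α : ℝ}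

theorem le_toReal_measure_ball (hV_pos : ∀ (x : M) (r : ℝ), 0 < r → 0 < (μ (ball x r)).toReal)
    (hnc : ∀ x : M, α ≤ (μ (ball x 1)).toReal) (x : M) {t : ℝ} (ht : 1 ≤ t) :
    α ≤ (μ (ball x t)).toReal :=
  (hnc x).trans <| ENNReal.toReal_mono (ENNReal.toReal_pos_iff.1 (hV_pos x t (by linarith))).2.ne
    (measure_mono (ball_subset_ball ht))

theorem div_toReal_measure_ball_le_liYauMajorant {γ R₀ : ℝ} {f : ℝ → ℝ} (hα : 0 < α)
    (hγ : 0 < γ) (hR₀ : 1 ≤ R₀) (hV_pos : ∀ (x : M) (r : ℝ), 0 < r → 0 < (μ (ball x r)).toReal)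
    (hnc : ∀ x : M, α ≤ (μ (ball x 1)).toReal) (hf_pos : ∀ t, R₀ ≤ t → 0 < f t)
    (huniform : ∀ (x : M) (r R : ℝ), R₀ ≤ r → r ≤ R →
      R * f R / (μ (ball x R)).toReal ≤ γ * (r * f r / (μ (ball x r)).toReal))
    (x₀ : M) {t : ℝ} (ht : 1 ≤ t) :
    t / (μ (ball x₀ t)).toReal ≤ liYauMajorant α γ R₀ f t := by
  have hV : α ≤ (μ (ball x₀ t)).toReal := le_toReal_measure_ball hV_pos hnc x₀ ht
  unfold liYauMajorant
  split_ifs with htR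
  · exact div_le_div₀ (by linarith) htR hα hV
  · have hRt : R₀ ≤ t := (not_le.1 htR).le
    have hft := hf_pos t hRt
    have hK : t * f t / (μ (ball x₀ t)).toReal ≤ γ * (R₀ * f R₀ / α) :=
      (huniform x₀ R₀ t le_rfl hRt).trans <| by
        have := hf_pos R₀ le_rfl
        gcongr
        exact le_toReal_measure_ball hV_pos hnc x₀ hR₀
    rw [mul_one_div, le_div_iff₀ hft, div_mul_eq_mul_div]
    exact hK

end LiYau

theorem exists_seq_pairwise_add_le_dist {M : Type*} [PseudoMetricSpace M] [Nonempty M]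
    (hM : ¬Bornology.IsBounded (univ : Set M)) (E : ℕ → ℝ) :
    ∃ o : ℕ → M, Pairwise fun j k => E j + E k ≤ dist (o j) (o k) := by
  obtain ⟨c⟩ := ‹Nonempty M›
  have hfar : ∀ r : ℝ, ∃ x : M, r < dist x c := by
    by_contra! h
    obtain ⟨r, hr⟩ := h
    exact hM (isBounded_iff_subset_closedBall c |>.2 ⟨r, fun x _ => hr x⟩)
  choose p hp using hfar
  let o : ℕ → M := fun k => Nat.rec c (fun k y => p (dist y c + |E k| + |E (k + 1)|)) k
  have hstep : ∀ k, dist (o k) c + |E k| + |E (k + 1)| < dist (o (k + 1)) c := fun k => hp _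
  have hgrow : ∀ j k, j < k → dist (o j) c + |E j| + |E k| ≤ dist (o k) c := by
    intro j k hjk
    induction k, hjk using Nat.le_induction with
    | base => exact (hstep j).le
    | succ k hjk ih => linarith [hstep k, abs_nonneg (E k)]
  refine ⟨o, fun j k hjk => ?_⟩
  wlog hlt : j < k generalizing j k
  · rw [add_comm, dist_comm]
    exact this k j hjk.symm (lt_of_le_of_ne (not_lt.1 hlt) hjk.symm)
  linarith [hgrow j k hlt, dist_triangle_left (o k) c (o j), le_abs_self (E j),
    le_abs_self (E k)]

theorem eq_of_dist_lt_of_dist_lt {M ι : Type*} [PseudoMetricSpace M] {o : ι → M} {E : ι → ℝ}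
    (ho : Pairwise fun j k => E j + E k ≤ dist (o j) (o k)) {x : M} {j k : ι}
    (hj : dist (o j) x < E j) (hk : dist (o k) x < E k) : j = k := by
  by_contra hjk
  linarith [ho hjk, dist_triangle_right (o j) (o k) x]

theorem ENNReal.tsum_ite_le_of_subsingleton {ι : Type*} {p : ι → Prop} [DecidablePred p]
    (hp : ∀ j k, p j → p k → j = k) {A : ι → ℝ≥0∞} {a : ℝ≥0∞} (hA : ∀ j, p j → A j ≤ a)
    (B : ι → ℝ≥0∞) : ∑' j, (if p j then A j else B j) ≤ a + ∑' j, B j := by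
  classical
  by_cases h : ∃ j₀, p j₀
  · obtain ⟨j₀, hj₀⟩ := h
    calc ∑' j, (if p j then A j else B j)
        ≤ ∑' j, ((if j = j₀ then a else 0) + B j) := by
          refine ENNReal.tsum_le_tsum fun j => ?_
          by_cases hj : p j
          · obtain rfl := hp j j₀ hj hj₀
            simpa [hj] using le_add_right (hA j hj)
          · simp [hj]
      _ = a + ∑' j, B j := by rw [ENNReal.tsum_add, tsum_ite_eq]
  · push Not at h
    simp only [h, if_false]
    exact le_add_self

section NormalizedIndicatorSum

variable {M : Type*} [MeasurableSpace M] (μ : Measure M)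

noncomputable def normalizedIndicatorSum (B : ℕ → Set M) (x : M) : ℝ≥0∞ :=
  ∑' j, (B j).indicator (fun _ => (μ (B j))⁻¹) x

variable {μ} {B : ℕ → Set M}

theorem measurable_normalizedIndicatorSum (hB : ∀ j, MeasurableSet (B j)) :
    Measurable (normalizedIndicatorSum μ B) :=
  .tsum fun j => measurable_const.indicator (hB j)

theorem lintegral_tsum_indicator_inv_measure_mul (hB : ∀ j, MeasurableSet (B j))
    (h0 : ∀ j, μ (B j) ≠ 0) (htop : ∀ j, μ (B j) ≠ ⊤) (b : ℕ → ℝ≥0∞) :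
    ∫⁻ x, ∑' j, (B j).indicator (fun _ => (μ (B j))⁻¹ * b j) x ∂μ = ∑' j, b j := by
  rw [lintegral_tsum fun j => (measurable_const.indicator (hB j)).aemeasurable]
  congr 1 with j
  rw [lintegral_indicator_const (hB j), mul_right_comm, ENNReal.inv_mul_cancel (h0 j) (htop j),
    one_mul]

theorem lintegral_normalizedIndicatorSum (hB : ∀ j, MeasurableSet (B j))
    (h0 : ∀ j, μ (B j) ≠ 0) (htop : ∀ j, μ (B j) ≠ ⊤) :
    ∫⁻ x, normalizedIndicatorSum μ B x ∂μ = ⊤ := by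
  simpa [normalizedIndicatorSum] using
    lintegral_tsum_indicator_inv_measure_mul hB h0 htop fun _ => 1

theorem setLIntegral_normalizedIndicatorSum_mul_le (hB : ∀ j, MeasurableSet (B j))
    (h0 : ∀ j, μ (B j) ≠ 0) (htop : ∀ j, μ (B j) ≠ ⊤) {S : Set M} (hS : MeasurableSet S)
    {g : M → ℝ≥0∞} {b : ℕ → ℝ≥0∞} (hg : ∀ j, ∀ x ∈ S, x ∈ B j → g x ≤ b j) :
    ∫⁻ x in S, normalizedIndicatorSum μ B x * g x ∂μ ≤ ∑' j, b j := by
  calc ∫⁻ x in S, normalizedIndicatorSum μ B x * g x ∂μ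
      ≤ ∫⁻ x in S, ∑' j, (B j).indicator (fun _ => (μ (B j))⁻¹ * b j) x ∂μ := by
        refine setLIntegral_mono' hS fun x hx => ?_
        rw [normalizedIndicatorSum, ← ENNReal.tsum_mul_right]
        refine ENNReal.tsum_le_tsum fun j => ?_
        by_cases hxj : x ∈ B j
        · simpa [hxj] using mul_le_mul_right (hg j x hx hxj) _
        · simp [hxj]
    _ ≤ ∑' j, b j :=
        (setLIntegral_le_lintegral _ _).trans
          (lintegral_tsum_indicator_inv_measure_mul hB h0 htop b).le

theorem normalizedIndicatorSum_le (hB : Pairwise (Disjoint on B)) {c : ℝ≥0∞}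
    (hc : ∀ j, c ≤ μ (B j)) (x : M) : normalizedIndicatorSum μ B x ≤ c⁻¹ := by
  classical
  simpa [normalizedIndicatorSum, indicator_apply] using
    ENNReal.tsum_ite_le_of_subsingleton (p := fun j => x ∈ B j)
      (fun j k hj hk => hB.eq (not_disjoint_iff.2 ⟨x, hj, hk⟩))
      (fun j _ => ENNReal.inv_le_inv.2 (hc j)) 0

end NormalizedIndicatorSum

theorem lintegral_normalizedIndicatorSum_ball_add_le {M : Type*} [PseudoMetricSpace M]
    [MeasurableSpace M] [OpensMeasurableSpace M] {μ : Measure M} {o : ℕ → M} {E : ℕ → ℝ}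
    (ho : Pairwise fun j k => E j + E k ≤ dist (o j) (o k)) (hE : ∀ j, 2 ≤ E j)
    (h0 : ∀ j, μ (ball (o j) 1) ≠ 0) (htop : ∀ j, μ (ball (o j) 1) ≠ ⊤) (x₀ : M)
    {g : M → ℝ≥0∞} {A : ℝ≥0∞} {b : ℕ → ℝ≥0∞} (hA : ∀ x ∉ ball x₀ 1, g x ≤ A)
    (hb : ∀ j, E j ≤ dist (o j) x₀ → ∀ x ∈ ball (o j) 1, g x ≤ b j) :
    ∫⁻ x in ball x₀ 1, normalizedIndicatorSum μ (fun j => ball (o j) 1) x ∂μ +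
        ∫⁻ x in (ball x₀ 1)ᶜ, normalizedIndicatorSum μ (fun j => ball (o j) 1) x * g x ∂μ ≤
      1 + (A + ∑' j, b j) := by
  classical
  have hball : ∀ j, MeasurableSet (ball (o j) 1) := fun j => measurableSet_ball
  have hnear : ∀ j k, dist (o j) x₀ < E j → dist (o k) x₀ < E k → j = k :=
    fun j k => eq_of_dist_lt_of_dist_lt ho
  gcongr
  · calc ∫⁻ x in ball x₀ 1, normalizedIndicatorSum μ (fun j => ball (o j) 1) x ∂μ
        ≤ ∑' j, if dist (o j) x₀ < E j then 1 else 0 := by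
          simpa using setLIntegral_normalizedIndicatorSum_mul_le hball h0 htop
            measurableSet_ball (g := fun _ => 1) fun j x hx hxj => by
              have : dist (o j) x₀ < E j := by
                linarith [dist_triangle (o j) x x₀, mem_ball'.1 hxj, mem_ball.1 hx, hE j]
              simp [this]
      _ ≤ 1 := by simpa using ENNReal.tsum_ite_le_of_subsingleton hnear (fun _ _ => le_rfl) 0
  · calc ∫⁻ x in (ball x₀ 1)ᶜ, normalizedIndicatorSum μ (fun j => ball (o j) 1) x * g x ∂μ
        ≤ ∑' j, if dist (o j) x₀ < E j then A else b j :=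
          setLIntegral_normalizedIndicatorSum_mul_le hball h0 htop measurableSet_ball.compl
            fun j x hx hxj => by
              split_ifs with hj
              · exact hA x hx
              · exact hb j (not_lt.1 hj) x hxj
      _ ≤ A + ∑' j, b j := ENNReal.tsum_ite_le_of_subsingleton hnear (fun _ _ => le_rfl) b

theorem stmt_10_general {M : Type*} [MetricSpace M] [MeasurableSpace M] [BorelSpace M] [Nonempty M]
    (μ : MeasureTheory.Measure M) (G : M → M → ℝ) (f : ℝ → ℝ)
    (c₂ α γ R₀ : ℝ)
    (hc₂ : 0 < c₂) (hα : 0 < α) (hγ : 0 < γ)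
    (hR₀ : 1 ≤ R₀)
    (hunbounded : ¬ Bornology.IsBounded (Set.univ : Set M))
    (hV_pos : ∀ (x : M) (r : ℝ), 0 < r → 0 < (μ (Metric.ball x r)).toReal)
    (hnc : ∀ x : M, α ≤ (μ (Metric.ball x 1)).toReal)
    (hf_pos : ∀ t, R₀ ≤ t → 0 < f t)
    (hf_int : MeasureTheory.IntegrableOn (fun t => 1 / f t) (Set.Ioi R₀))
    (huniform : ∀ (x : M) (r R : ℝ), R₀ ≤ r → r ≤ R →
      R * f R / (μ (Metric.ball x R)).toReal ≤ γ * (r * f r / (μ (Metric.ball x r)).toReal))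
    (hGreen_up : ∀ x x₀ : M, x ≠ x₀ →
      G x x₀ ≤ c₂ * ∫ t in Set.Ioi (dist x x₀), t / (μ (Metric.ball x₀ t)).toReal) :
    ∃ v : M → ℝ, Measurable v ∧ (∀ x, 0 ≤ v x) ∧ (∃ Cb : ℝ, ∀ x, v x ≤ Cb) ∧
      (∫⁻ x, ENNReal.ofReal (v x) ∂μ) = ⊤ ∧
      ∃ C : ℝ≥0∞, C ≠ ⊤ ∧ ∀ x₀ : M,
        (∫⁻ x in Metric.ball x₀ 1, ENNReal.ofReal (v x) ∂μ) +
          (∫⁻ x in (Metric.ball x₀ 1)ᶜ, ENNReal.ofReal (v x * G x x₀) ∂μ) ≤ C := by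
  set h := liYauMajorant α γ R₀ f
  have hh : IntegrableOn h (Ioi 1) := integrableOn_liYauMajorant hR₀ hf_int
  have hG : ∀ x x₀ : M, ∀ r, 1 ≤ r → r ≤ dist x x₀ → G x x₀ ≤ c₂ * ∫ t in Ioi r, h t :=
    fun x x₀ r hr hrx => (hGreen_up x x₀ (dist_pos.1 (by linarith))).trans <|
      mul_le_mul_of_nonneg_left (setIntegral_Ioi_le_of_le hh
        (fun t ht => div_nonneg (by linarith) toReal_nonneg)
        (fun t ht => div_toReal_measure_ball_le_liYauMajorant hα hγ hR₀ hV_pos hnc hf_pos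
          huniform x₀ ht.le) hr hrx) hc₂.le
  choose s hs1 hsh using fun j : ℕ => exists_one_le_setIntegral_Ioi_le hh (pow_pos one_half_pos j)
  obtain ⟨o, ho⟩ := exists_seq_pairwise_add_le_dist hunbounded fun j => s j + 1
  have hμ : ∀ x : M, μ (ball x 1) ≠ 0 ∧ μ (ball x 1) ≠ ⊤ := fun x => by
    simpa [pos_iff_ne_zero, lt_top_iff_ne_top] using ENNReal.toReal_pos_iff.1 (hV_pos x 1 one_pos)
  set w := normalizedIndicatorSum μ fun j => ball (o j) 1
  have hα_inv : (ENNReal.ofReal α)⁻¹ ≠ ⊤ := ENNReal.inv_ne_top.2 (ENNReal.ofReal_pos.2 hα).ne'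
  have hw_le : ∀ x, w x ≤ (ENNReal.ofReal α)⁻¹ :=
    normalizedIndicatorSum_le
      (fun j k hjk => ball_disjoint_ball (by linarith [ho hjk, hs1 j, hs1 k]))
      fun j => ofReal_le_of_le_toReal (hnc _)
  have hw_top : ∀ x, w x ≠ ⊤ := fun x => ne_top_of_le_ne_top hα_inv (hw_le x)
  refine ⟨fun x => (w x).toReal,
    (measurable_normalizedIndicatorSum fun _ => measurableSet_ball).ennreal_toReal,
    fun _ => toReal_nonneg, ⟨_, fun x => toReal_mono hα_inv (hw_le x)⟩, ?_,
    1 + (ENNReal.ofReal (c₂ * ∫ t in Ioi 1, h t) + ∑' j : ℕ, ENNReal.ofReal (c₂ * (1 / 2) ^ j)),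
    ?_, fun x₀ => ?_⟩
  · simpa [ofReal_toReal (hw_top _)] using
      lintegral_normalizedIndicatorSum (fun _ => measurableSet_ball) (fun _ => (hμ _).1)
        fun _ => (hμ _).2
  · rw [← ENNReal.ofReal_tsum_of_nonneg (fun j => by positivity)
      (summable_geometric_two.mul_left c₂)]
    finiteness
  · simp_rw [ENNReal.ofReal_mul toReal_nonneg, ofReal_toReal (hw_top _)]
    refine lintegral_normalizedIndicatorSum_ball_add_le ho (fun j => by linarith [hs1 j])
      (fun _ => (hμ _).1) (fun _ => (hμ _).2) x₀
      (fun x hx => ofReal_le_ofReal (hG x x₀ 1 le_rfl (by simpa using hx)))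
      fun j hj x hx => ofReal_le_ofReal <|
        (hG x x₀ (s j) (hs1 j) (by linarith [dist_triangle (o j) x x₀, mem_ball'.1 hx])).trans
          (mul_le_mul_of_nonneg_left (hsh j) hc₂.le)

/-- under the running assumptions (non-collapsing, uniformity and
integrability of `f`, two-sided Li–Yau Green bounds, `M` unbounded), the strict
inclusion `L¹(M) ⊊ L¹_G(M)` holds: there is a nonnegative bounded measurable `v`
with `∫ v dμ = ∞` but `sup_{x₀} ‖v‖_{L¹_{x₀,G}} < ∞`. -/
theorem stmt_10 {M : Type*} [MetricSpace M] [MeasurableSpace M] [BorelSpace M] [Nonempty M]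
    (μ : MeasureTheory.Measure M) (G : M → M → ℝ) (f : ℝ → ℝ)
    (n : ℕ) (hn : 3 ≤ n) (c₁ c₂ c₃ α γ R₀ : ℝ)
    (hc₁ : 0 < c₁) (hc₂ : 0 < c₂) (hc₃ : 0 < c₃) (hα : 0 < α) (hγ : 0 < γ)
    (hR₀ : 1 ≤ R₀)
    (hunbounded : ¬ Bornology.IsBounded (Set.univ : Set M))
    (hG_nonneg : ∀ x x₀ : M, 0 ≤ G x x₀)
    (hV_pos : ∀ (x : M) (r : ℝ), 0 < r → 0 < (μ (Metric.ball x r)).toReal)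
    (hnc : ∀ x : M, α ≤ (μ (Metric.ball x 1)).toReal)
    (hdoub : ∀ (x : M) (r : ℝ), 0 < r →
      (μ (Metric.ball x (2 * r))).toReal ≤ c₃ * (μ (Metric.ball x r)).toReal)
    (hf_pos : ∀ t, R₀ ≤ t → 0 < f t)
    (hf_mono : MonotoneOn f (Set.Ici R₀))
    (hf_int : MeasureTheory.IntegrableOn (fun t => 1 / f t) (Set.Ioi R₀))
    (huniform : ∀ (x : M) (r R : ℝ), R₀ ≤ r → r ≤ R →
      R * f R / (μ (Metric.ball x R)).toReal ≤ γ * (r * f r / (μ (Metric.ball x r)).toReal))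
    (hGreen_low : ∀ x x₀ : M, x ≠ x₀ →
      c₁ * (∫ t in Set.Ioi (dist x x₀), t / (μ (Metric.ball x₀ t)).toReal) ≤ G x x₀)
    (hGreen_up : ∀ x x₀ : M, x ≠ x₀ →
      G x x₀ ≤ c₂ * ∫ t in Set.Ioi (dist x x₀), t / (μ (Metric.ball x₀ t)).toReal) :
    ∃ v : M → ℝ, Measurable v ∧ (∀ x, 0 ≤ v x) ∧ (∃ Cb : ℝ, ∀ x, v x ≤ Cb) ∧
      (∫⁻ x, ENNReal.ofReal (v x) ∂μ) = ⊤ ∧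
      ∃ C : ℝ≥0∞, C ≠ ⊤ ∧ ∀ x₀ : M,
        (∫⁻ x in Metric.ball x₀ 1, ENNReal.ofReal (v x) ∂μ) +
          (∫⁻ x in (Metric.ball x₀ 1)ᶜ, ENNReal.ofReal (v x * G x x₀) ∂μ) ≤ C :=
  stmt_10_general μ G f c₂ α γ R₀ hc₂ hα hγ hR₀ hunbounded hV_pos hnc hf_pos hf_int huniform
    hGreen_up
end

section
/- Under the additional two-sided polynomial volume bound κ₁R^α ≤ Vol(B_R(x₀)) ≤ κ₂R^α (R ≥ 1, 2 < α ≤ n), any measurable u ≥ 0 with u(x) ≍ (1 + d(x,o))^{−a} belongs to L¹_G(M) if and only if a > 2; in particular sup_{x₀} [∫_{B_1(x₀)} u dμ + ∫_{M∖B_1(x₀)} u G(·,x₀) dμ] < ∞ whenever a > 2. -/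
/-!
Under the volume bounds `Vol(B_R) ≍ R^α` (`R ≥ 1`), the Green function satisfies
`G(x, x₀) ≍ d(x, x₀)^(2-α)` once `d(x, x₀) ≥ 1`.

If `a ≤ 2`, then `u · G(·, o) ≳ d(·, o)^(-α)` away from `o`, and the integral of `d^(-α)` diverges:
annuli `B_{λr} ∖ B_r` with `λ` large each carry a fixed positive amount of it.

If `a > 2`, then with `β = a + α - 2 > α` and `m = min(1 + d(x, o), d(x, x₀))` we have
`u(x) G(x, x₀) ≲ m^(-β) ≤ (1 + d(x, o))^(-β) + d(x, x₀)^(-β)`, and by a dyadic decomposition the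
integral of `d(·, y)^(-β)` outside `B_1(y)` is bounded independently of `y`.
-/

open MeasureTheory Set Metric Filter

lemma integral_Ioi_rpow_one_sub {α d : ℝ} (hα : 2 < α) (hd : 0 < d) :
    ∫ t in Ioi d, t ^ (1 - α) = d ^ (2 - α) / (α - 2) := by
  rw [integral_Ioi_rpow_of_lt (by linarith) hd, show 1 - α + 1 = 2 - α by ring, neg_div,
    ← div_neg, neg_sub]

lemma div_le_inv_mul_rpow_one_sub {t v κ α : ℝ} (ht : 0 < t) (hκ : 0 < κ) (hv : κ * t ^ α ≤ v) :
    t / v ≤ κ⁻¹ * t ^ (1 - α) := by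
  calc t / v ≤ t / (κ * t ^ α) := div_le_div_of_nonneg_left ht.le (by positivity) hv
    _ = κ⁻¹ * t ^ (1 - α) := by rw [Real.rpow_sub ht, Real.rpow_one]; field_simp

lemma inv_mul_rpow_one_sub_le_div {t v κ α : ℝ} (ht : 0 < t) (hv₀ : 0 < v) (hv : v ≤ κ * t ^ α) :
    κ⁻¹ * t ^ (1 - α) ≤ t / v := by
  calc κ⁻¹ * t ^ (1 - α) = t / (κ * t ^ α) := by
        rw [Real.rpow_sub ht, Real.rpow_one, div_mul_eq_div_div]; ring
    _ ≤ t / v := div_le_div_of_nonneg_left ht.le hv₀ hv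

section GreenIntegral

variable {V : ℝ → ℝ} {κ α d : ℝ}

lemma integrableOn_Ioi_div_of_mul_rpow_le (hV : Measurable V) (hκ : 0 < κ) (hα : 2 < α)
    (hd : 1 ≤ d) (hlow : ∀ t, 1 ≤ t → κ * t ^ α ≤ V t) :
    IntegrableOn (fun t => t / V t) (Ioi d) := by
  refine ((integrableOn_Ioi_rpow_of_lt (by linarith : 1 - α < -1) (by linarith : 0 < d)).const_mul
    κ⁻¹).mono' (measurable_id.div hV).aestronglyMeasurable ?_
  filter_upwards [ae_restrict_mem measurableSet_Ioi] with t ht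
  have ht₁ : 1 ≤ t := hd.trans (le_of_lt ht)
  have hV₀ : 0 ≤ V t := (by positivity : 0 ≤ κ * t ^ α).trans (hlow t ht₁)
  rw [Real.norm_of_nonneg (div_nonneg (by linarith) hV₀)]
  exact div_le_inv_mul_rpow_one_sub (by linarith) hκ (hlow t ht₁)

lemma integral_Ioi_div_le_s12 (hV : Measurable V) (hκ : 0 < κ) (hα : 2 < α) (hd : 1 ≤ d)
    (hlow : ∀ t, 1 ≤ t → κ * t ^ α ≤ V t) :
    ∫ t in Ioi d, t / V t ≤ d ^ (2 - α) / (κ * (α - 2)) := by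
  have hd₀ : 0 < d := by linarith
  calc ∫ t in Ioi d, t / V t ≤ ∫ t in Ioi d, κ⁻¹ * t ^ (1 - α) :=
        setIntegral_mono_on (integrableOn_Ioi_div_of_mul_rpow_le hV hκ hα hd hlow)
          ((integrableOn_Ioi_rpow_of_lt (by linarith) hd₀).const_mul _) measurableSet_Ioi
          fun t ht => div_le_inv_mul_rpow_one_sub (hd₀.trans ht) hκ (hlow t (hd.trans ht.le))
    _ = d ^ (2 - α) / (κ * (α - 2)) := by
        rw [integral_const_mul, integral_Ioi_rpow_one_sub hα hd₀, div_mul_eq_div_div_swap]; ring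

lemma le_integral_Ioi_div {κ₁ κ₂ : ℝ} (hV : Measurable V) (hκ₁ : 0 < κ₁) (hα : 2 < α)
    (hd : 1 ≤ d) (hlow : ∀ t, 1 ≤ t → κ₁ * t ^ α ≤ V t) (hup : ∀ t, 1 ≤ t → V t ≤ κ₂ * t ^ α) :
    d ^ (2 - α) / (κ₂ * (α - 2)) ≤ ∫ t in Ioi d, t / V t := by
  have hd₀ : 0 < d := by linarith
  calc d ^ (2 - α) / (κ₂ * (α - 2)) = ∫ t in Ioi d, κ₂⁻¹ * t ^ (1 - α) := by
        rw [integral_const_mul, integral_Ioi_rpow_one_sub hα hd₀, div_mul_eq_div_div_swap]; ring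
    _ ≤ ∫ t in Ioi d, t / V t :=
        setIntegral_mono_on ((integrableOn_Ioi_rpow_of_lt (by linarith) hd₀).const_mul _)
          (integrableOn_Ioi_div_of_mul_rpow_le hV hκ₁ hα hd hlow) measurableSet_Ioi fun t ht => by
            have ht₁ : 1 ≤ t := hd.trans ht.le
            exact inv_mul_rpow_one_sub_le_div (hd₀.trans ht)
              ((by positivity : 0 < κ₁ * t ^ α).trans_le (hlow t ht₁)) (hup t ht₁)

end GreenIntegral

lemma rpow_neg_mul_rpow_neg_le {p q a b : ℝ} (hp : 0 < p) (hq : 0 < q) (ha : 0 ≤ a) (hb : 0 ≤ b) :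
    p ^ (-a) * q ^ (-b) ≤ p ^ (-(a + b)) + q ^ (-(a + b)) := by
  have hm : 0 < min p q := lt_min hp hq
  calc p ^ (-a) * q ^ (-b) ≤ min p q ^ (-a) * min p q ^ (-b) :=
        mul_le_mul (Real.rpow_le_rpow_of_nonpos hm (min_le_left p q) (by linarith))
          (Real.rpow_le_rpow_of_nonpos hm (min_le_right p q) (by linarith)) (by positivity)
          (by positivity)
    _ = min p q ^ (-(a + b)) := by rw [← Real.rpow_add hm, neg_add]
    _ ≤ p ^ (-(a + b)) + q ^ (-(a + b)) := by
        rcases le_total p q with h | h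
        · rw [min_eq_left h]; linarith [Real.rpow_nonneg hq.le (-(a + b))]
        · rw [min_eq_right h]; linarith [Real.rpow_nonneg hp.le (-(a + b))]

lemma two_rpow_neg_mul_rpow_neg_le {d a α : ℝ} (hd : 1 ≤ d) (ha : a ≤ 2) (hα : 2 ≤ α) :
    2 ^ (-α) * d ^ (-α) ≤ (1 + d) ^ (-a) * d ^ (2 - α) := by
  have hd₁ : 0 < 1 + d := by linarith
  calc 2 ^ (-α) * d ^ (-α) = (2 * d) ^ (-α) := (Real.mul_rpow zero_le_two (by linarith)).symm
    _ ≤ (1 + d) ^ (-α) := Real.rpow_le_rpow_of_nonpos hd₁ (by linarith) (by linarith)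
    _ = (1 + d) ^ (-2 : ℝ) * (1 + d) ^ (2 - α) := by rw [← Real.rpow_add hd₁]; ring_nf
    _ ≤ (1 + d) ^ (-a) * d ^ (2 - α) :=
        mul_le_mul (Real.rpow_le_rpow_of_exponent_le (by linarith) (by linarith))
          (Real.rpow_le_rpow_of_nonpos (by linarith) (by linarith) (by linarith)) (by positivity)
          (by positivity)

section GreenBounds

variable {M : Type*} [PseudoMetricSpace M] [MeasurableSpace M] {μ : Measure M} {y : M}
  {c κ α d : ℝ}

lemma measurable_measure_ball_toReal (h : ∀ R, μ (ball y R) ≠ ⊤) :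
    Measurable fun R => (μ (ball y R)).toReal :=
  Monotone.measurable fun _ _ hRS => ENNReal.toReal_mono (h _) (measure_mono (ball_subset_ball hRS))

lemma mul_integral_div_measure_ball_le (hc : 0 ≤ c) (hκ : 0 < κ) (hα : 2 < α) (hd : 1 ≤ d)
    (hfin : ∀ R, μ (ball y R) ≠ ⊤) (hlow : ∀ R, 1 ≤ R → κ * R ^ α ≤ (μ (ball y R)).toReal) :
    c * ∫ t in Ioi d, t / (μ (ball y t)).toReal ≤ c / (κ * (α - 2)) * d ^ (2 - α) :=
  calc c * ∫ t in Ioi d, t / (μ (ball y t)).toReal ≤ c * (d ^ (2 - α) / (κ * (α - 2))) := by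
        gcongr
        exact integral_Ioi_div_le_s12 (measurable_measure_ball_toReal hfin) hκ hα hd hlow
    _ = c / (κ * (α - 2)) * d ^ (2 - α) := by ring

lemma le_mul_integral_div_measure_ball {κ₁ κ₂ : ℝ} (hc : 0 ≤ c) (hκ₁ : 0 < κ₁) (hα : 2 < α)
    (hd : 1 ≤ d) (hfin : ∀ R, μ (ball y R) ≠ ⊤)
    (hVol : ∀ R, 1 ≤ R → κ₁ * R ^ α ≤ (μ (ball y R)).toReal ∧ (μ (ball y R)).toReal ≤ κ₂ * R ^ α) :
    c / (κ₂ * (α - 2)) * d ^ (2 - α) ≤ c * ∫ t in Ioi d, t / (μ (ball y t)).toReal :=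
  calc c / (κ₂ * (α - 2)) * d ^ (2 - α) = c * (d ^ (2 - α) / (κ₂ * (α - 2))) := by ring
    _ ≤ c * ∫ t in Ioi d, t / (μ (ball y t)).toReal := by
        gcongr
        exact le_integral_Ioi_div (measurable_measure_ball_toReal hfin) hκ₁ hα hd
          (fun R hR => (hVol R hR).1) (fun R hR => (hVol R hR).2)

end GreenBounds

section Annuli

variable {M : Type*} [PseudoMetricSpace M] [MeasurableSpace M] {μ : Measure M} {o : M}

lemma measure_ball_le_add_annulus (r s : ℝ) :
    μ (ball o s) ≤ μ (ball o r) + μ {x | dist x o ∈ Ico r s} := by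
  refine (measure_mono fun x hx => ?_).trans (measure_union_le _ _)
  by_cases h : dist x o < r
  · exact Or.inl h
  · exact Or.inr ⟨not_lt.1 h, hx⟩

variable [OpensMeasurableSpace M]

lemma measurableSet_annulus (r s : ℝ) : MeasurableSet {x | dist x o ∈ Ico r s} := by
  measurability

lemma ofReal_sub_le_lintegral_annulus {κ₁ κ₂ α L r : ℝ} (hκ₂ : 0 ≤ κ₂) (hα : 0 ≤ α)
    (hL : 1 ≤ L) (hr : 1 ≤ r) (hlow : ENNReal.ofReal (κ₁ * (L * r) ^ α) ≤ μ (ball o (L * r)))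
    (hup : μ (ball o r) ≤ ENNReal.ofReal (κ₂ * r ^ α)) :
    ENNReal.ofReal (κ₁ - κ₂ * L ^ (-α)) ≤
      ∫⁻ x in {x | dist x o ∈ Ico r (L * r)}, ENNReal.ofReal (dist x o ^ (-α)) ∂μ := by
  have hr₀ : 0 < r := by linarith
  have hμ : ENNReal.ofReal (κ₁ * (L * r) ^ α - κ₂ * r ^ α) ≤ μ {x | dist x o ∈ Ico r (L * r)} :=
    calc ENNReal.ofReal (κ₁ * (L * r) ^ α - κ₂ * r ^ α)
        = ENNReal.ofReal (κ₁ * (L * r) ^ α) - ENNReal.ofReal (κ₂ * r ^ α) :=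
          ENNReal.ofReal_sub _ (by positivity)
      _ ≤ μ (ball o (L * r)) - μ (ball o r) := tsub_le_tsub hlow hup
      _ ≤ μ {x | dist x o ∈ Ico r (L * r)} := tsub_le_iff_left.2 (measure_ball_le_add_annulus _ _)
  calc ENNReal.ofReal (κ₁ - κ₂ * L ^ (-α))
      = ENNReal.ofReal ((L * r) ^ (-α)) * ENNReal.ofReal (κ₁ * (L * r) ^ α - κ₂ * r ^ α) := by
        rw [← ENNReal.ofReal_mul (by positivity)]
        congr 1
        have hLα : 0 < L ^ α := by positivity
        have hrα : 0 < r ^ α := by positivity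
        rw [Real.mul_rpow (by linarith) hr₀.le, Real.mul_rpow (by linarith) hr₀.le,
          Real.rpow_neg (by linarith), Real.rpow_neg hr₀.le]
        field_simp
    _ ≤ ENNReal.ofReal ((L * r) ^ (-α)) * μ {x | dist x o ∈ Ico r (L * r)} := by gcongr
    _ = ∫⁻ _ in {x | dist x o ∈ Ico r (L * r)}, ENNReal.ofReal ((L * r) ^ (-α)) ∂μ :=
        (setLIntegral_const _ _).symm
    _ ≤ ∫⁻ x in {x | dist x o ∈ Ico r (L * r)}, ENNReal.ofReal (dist x o ^ (-α)) ∂μ :=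
        setLIntegral_mono' (measurableSet_annulus _ _) fun x hx => ENNReal.ofReal_le_ofReal
          (Real.rpow_le_rpow_of_nonpos (hr₀.trans_le hx.1) hx.2.le (by linarith))

lemma lintegral_compl_ball_rpow_neg_dist_eq_top {κ₁ κ₂ α : ℝ} (hκ₁ : 0 < κ₁) (hκ₂ : 0 ≤ κ₂)
    (hα : 0 < α) (hVol : ∀ R, 1 ≤ R →
      ENNReal.ofReal (κ₁ * R ^ α) ≤ μ (ball o R) ∧ μ (ball o R) ≤ ENNReal.ofReal (κ₂ * R ^ α)) :
    ∫⁻ x in (ball o 1)ᶜ, ENNReal.ofReal (dist x o ^ (-α)) ∂μ = ⊤ := by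
  obtain ⟨L, hL, hκL⟩ : ∃ L : ℝ, 1 ≤ L ∧ κ₂ * L ^ (-α) < κ₁ :=
    ((eventually_ge_atTop 1).and (((tendsto_rpow_neg_atTop hα).const_mul κ₂).eventually_lt_const
      (by simpa using hκ₁))).exists
  set A : ℕ → Set M := fun j => {x | dist x o ∈ Ico (L ^ j) (L * L ^ j)}
  have hA_disj : Pairwise (Function.onFun Disjoint A) := by
    refine (pow_right_mono₀ hL).pairwise_disjoint_on_Ico_succ.mono fun i j h => ?_
    simp only [Function.onFun, Order.succ_eq_add_one, pow_succ'] at h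
    exact h.preimage (dist · o)
  have hA_sub : ⋃ j, A j ⊆ (ball o 1)ᶜ :=
    iUnion_subset fun j x hx => not_lt.2 ((one_le_pow₀ hL).trans hx.1)
  refine top_le_iff.1 ?_
  calc ⊤ = ∑' _ : ℕ, ENNReal.ofReal (κ₁ - κ₂ * L ^ (-α)) :=
        (ENNReal.tsum_const_eq_top_of_ne_zero (by simpa using hκL)).symm
    _ ≤ ∑' j, ∫⁻ x in A j, ENNReal.ofReal (dist x o ^ (-α)) ∂μ :=
        ENNReal.tsum_le_tsum fun j => ofReal_sub_le_lintegral_annulus hκ₂ hα.le hL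
          (one_le_pow₀ hL) (hVol _ (one_le_mul_of_one_le_of_one_le hL (one_le_pow₀ hL))).1
          (hVol _ (one_le_pow₀ hL)).2
    _ = ∫⁻ x in ⋃ j, A j, ENNReal.ofReal (dist x o ^ (-α)) ∂μ :=
        (lintegral_iUnion (fun j => measurableSet_annulus _ _) hA_disj _).symm
    _ ≤ ∫⁻ x in (ball o 1)ᶜ, ENNReal.ofReal (dist x o ^ (-α)) ∂μ := lintegral_mono_set hA_sub

lemma lintegral_annulus_rpow_neg_dist_le {κ α β r : ℝ} (hβ : 0 ≤ β) (hr : 1 ≤ r)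
    (hup : μ (ball o (2 * r)) ≤ ENNReal.ofReal (κ * (2 * r) ^ α)) :
    ∫⁻ x in {x | dist x o ∈ Ico r (2 * r)}, ENNReal.ofReal (dist x o ^ (-β)) ∂μ ≤
      ENNReal.ofReal (κ * 2 ^ α * r ^ (α - β)) := by
  have hr₀ : 0 < r := by linarith
  calc ∫⁻ x in {x | dist x o ∈ Ico r (2 * r)}, ENNReal.ofReal (dist x o ^ (-β)) ∂μ
      ≤ ∫⁻ _ in {x | dist x o ∈ Ico r (2 * r)}, ENNReal.ofReal (r ^ (-β)) ∂μ :=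
        setLIntegral_mono' (measurableSet_annulus _ _) fun x hx => ENNReal.ofReal_le_ofReal
          (Real.rpow_le_rpow_of_nonpos hr₀ hx.1 (by linarith))
    _ = ENNReal.ofReal (r ^ (-β)) * μ {x | dist x o ∈ Ico r (2 * r)} := setLIntegral_const _ _
    _ ≤ ENNReal.ofReal (r ^ (-β)) * ENNReal.ofReal (κ * (2 * r) ^ α) := by
        gcongr
        exact (measure_mono fun x hx => mem_ball.2 hx.2).trans hup
    _ = ENNReal.ofReal (κ * 2 ^ α * r ^ (α - β)) := by
        rw [← ENNReal.ofReal_mul (by positivity), Real.mul_rpow zero_le_two hr₀.le,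
          Real.rpow_sub hr₀, Real.rpow_neg hr₀.le]
        ring_nf

lemma lintegral_compl_ball_rpow_neg_dist_le {κ α β : ℝ} (hκ : 0 ≤ κ) (hα : 0 ≤ α) (hαβ : α < β)
    (hVol : ∀ R, 1 ≤ R → μ (ball o R) ≤ ENNReal.ofReal (κ * R ^ α)) :
    ∫⁻ x in (ball o 1)ᶜ, ENNReal.ofReal (dist x o ^ (-β)) ∂μ ≤
      ENNReal.ofReal (κ * 2 ^ α * (1 - 2 ^ (α - β))⁻¹) := by
  set q : ℝ := 2 ^ (α - β)
  have hq₀ : 0 ≤ q := by positivity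
  have hq₁ : q < 1 := Real.rpow_lt_one_of_one_lt_of_neg one_lt_two (by linarith)
  set A : ℕ → Set M := fun k => {x | dist x o ∈ Ico (2 ^ k) (2 * 2 ^ k)}
  have hcover : (ball o 1)ᶜ ⊆ ⋃ k, A k := fun x hx => by
    have hx₁ : 1 ≤ dist x o := by simpa using hx
    obtain ⟨k, hk⟩ := exists_nat_pow_near hx₁ one_lt_two
    exact mem_iUnion.2 ⟨k, hk.1, by rw [← pow_succ']; exact hk.2⟩
  calc ∫⁻ x in (ball o 1)ᶜ, ENNReal.ofReal (dist x o ^ (-β)) ∂μ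
      ≤ ∫⁻ x in ⋃ k, A k, ENNReal.ofReal (dist x o ^ (-β)) ∂μ := lintegral_mono_set hcover
    _ ≤ ∑' k, ∫⁻ x in A k, ENNReal.ofReal (dist x o ^ (-β)) ∂μ := lintegral_iUnion_le _ _
    _ ≤ ∑' k : ℕ, ENNReal.ofReal (κ * 2 ^ α * q ^ k) := ENNReal.tsum_le_tsum fun k => by
        have h2k : (1 : ℝ) ≤ 2 ^ k := one_le_pow₀ one_le_two
        simpa only [q, Real.rpow_pow_comm zero_le_two] using
          lintegral_annulus_rpow_neg_dist_le (by linarith) h2k (hVol _ (by linarith))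
    _ = ENNReal.ofReal (∑' k : ℕ, κ * 2 ^ α * q ^ k) :=
        (ENNReal.ofReal_tsum_of_nonneg (fun k => by positivity)
          ((summable_geometric_of_lt_one hq₀ hq₁).mul_left _)).symm
    _ = ENNReal.ofReal (κ * 2 ^ α * (1 - q)⁻¹) := by
        rw [tsum_mul_left, tsum_geometric_of_lt_one hq₀ hq₁]

lemma lintegral_one_add_dist_rpow_neg_le {κ α β : ℝ} (hκ : 0 ≤ κ) (hα : 0 ≤ α) (hαβ : α < β)
    (hVol : ∀ R, 1 ≤ R → μ (ball o R) ≤ ENNReal.ofReal (κ * R ^ α)) :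
    ∫⁻ x, ENNReal.ofReal ((1 + dist x o) ^ (-β)) ∂μ ≤
      ENNReal.ofReal κ + ENNReal.ofReal (κ * 2 ^ α * (1 - 2 ^ (α - β))⁻¹) := by
  rw [← lintegral_add_compl _ (measurableSet_ball : MeasurableSet (ball o 1))]
  gcongr ?_ + ?_
  · calc ∫⁻ x in ball o 1, ENNReal.ofReal ((1 + dist x o) ^ (-β)) ∂μ
        ≤ ∫⁻ _ in ball o 1, 1 ∂μ := setLIntegral_mono' measurableSet_ball fun x _ =>
          ENNReal.ofReal_le_one.2 (Real.rpow_le_one_of_one_le_of_nonpos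
            (le_add_of_nonneg_right dist_nonneg) (by linarith))
      _ = μ (ball o 1) := by rw [setLIntegral_const, one_mul]
      _ ≤ ENNReal.ofReal κ := by simpa using hVol 1 le_rfl
  · refine le_trans (setLIntegral_mono' measurableSet_ball.compl fun x hx =>
      ENNReal.ofReal_le_ofReal ?_) (lintegral_compl_ball_rpow_neg_dist_le hκ hα hαβ hVol)
    have hd : 1 ≤ dist x o := not_lt.1 hx
    exact Real.rpow_le_rpow_of_nonpos (by linarith) (by linarith) (by linarith)

end Annuli

section WeightedNorm

variable {M : Type*} [PseudoMetricSpace M] [MeasurableSpace M] [OpensMeasurableSpace M]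
  {μ : Measure M} {G : M → M → ℝ} {u : M → ℝ} {o : M}

lemma lintegral_compl_ball_mul_green_eq_top {κ₁ κ₂ α a c k : ℝ} (hκ₁ : 0 < κ₁) (hκ₂ : 0 ≤ κ₂)
    (hα : 2 < α) (ha : a ≤ 2) (hc : 0 < c) (hk : 0 < k) (hVol : ∀ R, 1 ≤ R →
      ENNReal.ofReal (κ₁ * R ^ α) ≤ μ (ball o R) ∧ μ (ball o R) ≤ ENNReal.ofReal (κ₂ * R ^ α))
    (hG : ∀ x, 1 ≤ dist x o → c * dist x o ^ (2 - α) ≤ G x o)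
    (hu_nonneg : ∀ x, 0 ≤ u x) (hu : ∀ x, k * (1 + dist x o) ^ (-a) ≤ u x) :
    ∫⁻ x in (ball o 1)ᶜ, ENNReal.ofReal (u x * G x o) ∂μ = ⊤ := by
  have hpt : ∀ x ∈ (ball o 1)ᶜ, ENNReal.ofReal (k * c * 2 ^ (-α)) *
      ENNReal.ofReal (dist x o ^ (-α)) ≤ ENNReal.ofReal (u x * G x o) := by
    intro x hx
    have hd : 1 ≤ dist x o := by simpa using hx
    rw [← ENNReal.ofReal_mul (by positivity)]
    refine ENNReal.ofReal_le_ofReal ?_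
    calc k * c * 2 ^ (-α) * dist x o ^ (-α) = k * c * (2 ^ (-α) * dist x o ^ (-α)) := by ring
      _ ≤ k * c * ((1 + dist x o) ^ (-a) * dist x o ^ (2 - α)) :=
          mul_le_mul_of_nonneg_left (two_rpow_neg_mul_rpow_neg_le hd ha hα.le) (by positivity)
      _ = (k * (1 + dist x o) ^ (-a)) * (c * dist x o ^ (2 - α)) := by ring
      _ ≤ u x * G x o := mul_le_mul (hu x) (hG x hd) (by positivity) (hu_nonneg x)
  refine top_le_iff.1 ?_
  calc ⊤ = ENNReal.ofReal (k * c * 2 ^ (-α)) *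
        ∫⁻ x in (ball o 1)ᶜ, ENNReal.ofReal (dist x o ^ (-α)) ∂μ := by
        rw [lintegral_compl_ball_rpow_neg_dist_eq_top hκ₁ hκ₂ (by linarith) hVol,
          ENNReal.mul_top (ENNReal.ofReal_pos.2 (by positivity)).ne']
    _ = ∫⁻ x in (ball o 1)ᶜ, ENNReal.ofReal (k * c * 2 ^ (-α)) *
        ENNReal.ofReal (dist x o ^ (-α)) ∂μ := (lintegral_const_mul' _ _ ENNReal.ofReal_ne_top).symm
    _ ≤ ∫⁻ x in (ball o 1)ᶜ, ENNReal.ofReal (u x * G x o) ∂μ :=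
        setLIntegral_mono' measurableSet_ball.compl hpt

lemma iSup_lintegral_ball_add_lintegral_compl_ball_mul_green_lt_top {κ α a c k : ℝ} (hκ : 0 ≤ κ)
    (hα : 2 < α) (ha : 2 < a) (hc : 0 ≤ c) (hk : 0 ≤ k)
    (hVol : ∀ y R, 1 ≤ R → μ (ball y R) ≤ ENNReal.ofReal (κ * R ^ α))
    (hG_nonneg : ∀ x y, 0 ≤ G x y) (hG : ∀ x y, 1 ≤ dist x y → G x y ≤ c * dist x y ^ (2 - α))
    (hu : ∀ x, u x ≤ k * (1 + dist x o) ^ (-a)) :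
    (⨆ x₀ : M, (∫⁻ x in ball x₀ 1, ENNReal.ofReal (u x) ∂μ) +
        ∫⁻ x in (ball x₀ 1)ᶜ, ENNReal.ofReal (u x * G x x₀) ∂μ) < ⊤ := by
  set β := a + (α - 2)
  set T := ENNReal.ofReal (κ * 2 ^ α * (1 - 2 ^ (α - β))⁻¹)
  have hu_le : ∀ x, u x ≤ k := fun x => (hu x).trans (mul_le_of_le_one_right hk
    (Real.rpow_le_one_of_one_le_of_nonpos (le_add_of_nonneg_right dist_nonneg) (by linarith)))
  have hpt : ∀ x₀, ∀ x ∈ (ball x₀ 1)ᶜ, ENNReal.ofReal (u x * G x x₀) ≤ ENNReal.ofReal (k * c) *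
      (ENNReal.ofReal ((1 + dist x o) ^ (-β)) + ENNReal.ofReal (dist x x₀ ^ (-β))) := by
    intro x₀ x hx
    have hd : 1 ≤ dist x x₀ := by simpa using hx
    rw [← ENNReal.ofReal_add (by positivity) (by positivity), ← ENNReal.ofReal_mul (by positivity)]
    refine ENNReal.ofReal_le_ofReal ?_
    calc u x * G x x₀ ≤ (k * (1 + dist x o) ^ (-a)) * (c * dist x x₀ ^ (-(α - 2))) := by
          rw [neg_sub]; exact mul_le_mul (hu x) (hG x x₀ hd) (hG_nonneg x x₀) (by positivity)
      _ = k * c * ((1 + dist x o) ^ (-a) * dist x x₀ ^ (-(α - 2))) := by ring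
      _ ≤ k * c * ((1 + dist x o) ^ (-β) + dist x x₀ ^ (-β)) := by
          gcongr
          exact rpow_neg_mul_rpow_neg_le (by positivity) (by linarith) (by linarith) (by linarith)
  refine lt_of_le_of_lt (iSup_le fun x₀ => ?_) (?_ : ENNReal.ofReal k * ENNReal.ofReal κ +
    ENNReal.ofReal (k * c) * (ENNReal.ofReal κ + T + T) < ⊤)
  · gcongr ?_ + ?_
    · calc ∫⁻ x in ball x₀ 1, ENNReal.ofReal (u x) ∂μ
          ≤ ∫⁻ _ in ball x₀ 1, ENNReal.ofReal k ∂μ :=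
            setLIntegral_mono' measurableSet_ball fun x _ => ENNReal.ofReal_le_ofReal (hu_le x)
        _ = ENNReal.ofReal k * μ (ball x₀ 1) := setLIntegral_const _ _
        _ ≤ ENNReal.ofReal k * ENNReal.ofReal κ := by gcongr; simpa using hVol x₀ 1 le_rfl
    · calc ∫⁻ x in (ball x₀ 1)ᶜ, ENNReal.ofReal (u x * G x x₀) ∂μ
          ≤ ∫⁻ x in (ball x₀ 1)ᶜ, ENNReal.ofReal (k * c) * (ENNReal.ofReal ((1 + dist x o) ^ (-β)) +
              ENNReal.ofReal (dist x x₀ ^ (-β))) ∂μ :=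
            setLIntegral_mono' measurableSet_ball.compl (hpt x₀)
        _ = ENNReal.ofReal (k * c) * ((∫⁻ x in (ball x₀ 1)ᶜ,
              ENNReal.ofReal ((1 + dist x o) ^ (-β)) ∂μ) +
              ∫⁻ x in (ball x₀ 1)ᶜ, ENNReal.ofReal (dist x x₀ ^ (-β)) ∂μ) := by
            rw [lintegral_const_mul' _ _ ENNReal.ofReal_ne_top, lintegral_add_left (by fun_prop)]
        _ ≤ ENNReal.ofReal (k * c) * (ENNReal.ofReal κ + T + T) := by
            gcongr
            · exact (setLIntegral_le_lintegral _ _).trans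
                (lintegral_one_add_dist_rpow_neg_le hκ (by linarith) (by linarith) (hVol o))
            · exact lintegral_compl_ball_rpow_neg_dist_le hκ (by linarith) (by linarith) (hVol x₀)
  · finiteness

end WeightedNorm

theorem stmt_12_general {M : Type*} [MetricSpace M] [MeasurableSpace M] [BorelSpace M]
    (μ : MeasureTheory.Measure M) (G : M → M → ℝ)
    (c₁ c₂ κ₁ κ₂ α a : ℝ)
    (hc₁ : 0 < c₁) (hc₂ : 0 < c₂) (hκ₁ : 0 < κ₁) (hκ₂ : 0 < κ₂)
    (hα₂ : 2 < α)
    (hG_nonneg : ∀ x x₀ : M, 0 ≤ G x x₀)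
    (hVol : ∀ (x₀ : M) (R : ℝ), 1 ≤ R →
      κ₁ * R ^ α ≤ (μ (Metric.ball x₀ R)).toReal ∧
        (μ (Metric.ball x₀ R)).toReal ≤ κ₂ * R ^ α)
    (hVol_fin : ∀ (x₀ : M) (R : ℝ), μ (Metric.ball x₀ R) ≠ ⊤)
    (hGreen_low : ∀ x x₀ : M, x ≠ x₀ →
      c₁ * (∫ t in Set.Ioi (dist x x₀), t / (μ (Metric.ball x₀ t)).toReal) ≤ G x x₀)
    (hGreen_up : ∀ x x₀ : M, x ≠ x₀ →
      G x x₀ ≤ c₂ * ∫ t in Set.Ioi (dist x x₀), t / (μ (Metric.ball x₀ t)).toReal)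
    (o : M) (u : M → ℝ) (hu_nonneg : ∀ x, 0 ≤ u x)
    (k₁ k₂ : ℝ) (hk₁ : 0 < k₁) (hk₂ : 0 < k₂)
    (hu_low : ∀ x : M, k₁ * (1 + dist x o) ^ (-a) ≤ u x)
    (hu_up : ∀ x : M, u x ≤ k₂ * (1 + dist x o) ^ (-a)) :
    (⨆ x₀ : M, (∫⁻ x in Metric.ball x₀ 1, ENNReal.ofReal (u x) ∂μ) +
        ∫⁻ x in (Metric.ball x₀ 1)ᶜ, ENNReal.ofReal (u x * G x x₀) ∂μ) < ⊤ ↔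
      2 < a := by
  have hVol' : ∀ y R, 1 ≤ R →
      ENNReal.ofReal (κ₁ * R ^ α) ≤ μ (ball y R) ∧ μ (ball y R) ≤ ENNReal.ofReal (κ₂ * R ^ α) :=
    fun y R hR => ⟨ENNReal.ofReal_le_of_le_toReal (hVol y R hR).1,
      (ENNReal.le_ofReal_iff_toReal_le (hVol_fin y R) (by positivity)).2 (hVol y R hR).2⟩
  constructor
  · intro hfin
    by_contra! ha
    refine hfin.ne (top_unique ?_)
    calc ⊤ = ∫⁻ x in (ball o 1)ᶜ, ENNReal.ofReal (u x * G x o) ∂μ :=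
          (lintegral_compl_ball_mul_green_eq_top hκ₁ hκ₂.le hα₂ ha (by positivity) hk₁ (hVol' o)
            (fun x hx => (le_mul_integral_div_measure_ball hc₁.le hκ₁ hα₂ hx (hVol_fin o)
              (hVol o)).trans (hGreen_low x o (dist_pos.1 (by linarith))))
            hu_nonneg hu_low).symm
      _ ≤ _ := le_iSup_of_le o le_add_self
  · intro ha
    exact iSup_lintegral_ball_add_lintegral_compl_ball_mul_green_lt_top hκ₂.le hα₂ ha
      (by positivity : 0 ≤ c₂ / (κ₁ * (α - 2))) hk₂.le (fun y R hR => (hVol' y R hR).2) hG_nonneg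
      (fun x x₀ hx => (hGreen_up x x₀ (dist_pos.1 (by linarith))).trans
        (mul_integral_div_measure_ball_le hc₂.le hκ₁ hα₂ hx (hVol_fin x₀)
          fun R hR => (hVol x₀ R hR).1)) hu_up

/-- under the two-sided polynomial volume bound `κ₁R^α ≤ Vol(B_R(x₀)) ≤ κ₂R^α`
(`R ≥ 1`, `2 < α ≤ n`) and the two-sided Li–Yau Green bounds, a measurable `u ≥ 0` with
`u ≍ (1+d(x,o))^{−a}` belongs to `L¹_G(M)` (i.e. has finite uniform weighted norm
`sup_{x₀}[∫_{B_1(x₀)} u dμ + ∫_{M∖B_1(x₀)} u G(·,x₀) dμ]`) if and only if `a > 2`. -/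
theorem stmt_12 {M : Type*} [MetricSpace M] [MeasurableSpace M] [BorelSpace M]
    (μ : MeasureTheory.Measure M) (G : M → M → ℝ)
    (n : ℕ) (hn : 3 ≤ n) (c₁ c₂ κ₁ κ₂ α a : ℝ)
    (hc₁ : 0 < c₁) (hc₂ : 0 < c₂) (hκ₁ : 0 < κ₁) (hκ₂ : 0 < κ₂)
    (hα₂ : 2 < α) (hαn : α ≤ n) (ha : 0 < a)
    (hG_nonneg : ∀ x x₀ : M, 0 ≤ G x x₀)
    (hVol : ∀ (x₀ : M) (R : ℝ), 1 ≤ R →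
      κ₁ * R ^ α ≤ (μ (Metric.ball x₀ R)).toReal ∧
        (μ (Metric.ball x₀ R)).toReal ≤ κ₂ * R ^ α)
    (hVol_fin : ∀ (x₀ : M) (R : ℝ), μ (Metric.ball x₀ R) ≠ ⊤)
    (hV_pos : ∀ (x : M) (r : ℝ), 0 < r → 0 < (μ (Metric.ball x r)).toReal)
    (hGreen_low : ∀ x x₀ : M, x ≠ x₀ →
      c₁ * (∫ t in Set.Ioi (dist x x₀), t / (μ (Metric.ball x₀ t)).toReal) ≤ G x x₀)
    (hGreen_up : ∀ x x₀ : M, x ≠ x₀ →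
      G x x₀ ≤ c₂ * ∫ t in Set.Ioi (dist x x₀), t / (μ (Metric.ball x₀ t)).toReal)
    (o : M) (u : M → ℝ) (hu_meas : Measurable u) (hu_nonneg : ∀ x, 0 ≤ u x)
    (k₁ k₂ : ℝ) (hk₁ : 0 < k₁) (hk₂ : 0 < k₂)
    (hu_low : ∀ x : M, k₁ * (1 + dist x o) ^ (-a) ≤ u x)
    (hu_up : ∀ x : M, u x ≤ k₂ * (1 + dist x o) ^ (-a)) :
    (⨆ x₀ : M, (∫⁻ x in Metric.ball x₀ 1, ENNReal.ofReal (u x) ∂μ) +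
        ∫⁻ x in (Metric.ball x₀ 1)ᶜ, ENNReal.ofReal (u x * G x x₀) ∂μ) < ⊤ ↔
      2 < a :=
  stmt_12_general μ G c₁ c₂ κ₁ κ₂ α a hc₁ hc₂ hκ₁ hκ₂ hα₂ hG_nonneg hVol hVol_fin hGreen_low
    hGreen_up o u hu_nonneg k₁ k₂ hk₁ hk₂ hu_low hu_up
end

section
/- Let m > 1, n ≥ 3 and suppose for a.e. x₀ and all t₀ > 0: u(x₀,t₀)^m ≤ (C/t₀)∫_M u(x,t₀)G(x,x₀)dμ(x), together with the short-range bound ∫_{B_R(x₀)} G(·,x₀)dμ ≤ C R² for 0 < R ≤ 1, the tail bound ∫_{M∖B_R(x₀)} u(·,t₀)G(·,x₀)dμ ≤ C R^{−(n−2)}‖u₀‖_{L¹} for 0 < R ≤ 1, and ‖u(t)‖_{L¹} ≤ ‖u₀‖_{L¹}. Then there exist C', K > 0 such that ‖u(t)‖_{L^∞} ≤ C' t^{−n/((m−1)n+2)} ‖u₀‖_{L¹}^{2/(n(m−1)+2)} for all 0 < t ≤ K‖u₀‖_{L¹}^{−(m−1)} (the Euclidean-type short-time smoothing estimate), obtained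 by optimizing R = const · t^{1/(n(m−1)+2)}‖u₀‖_{L¹}^{(m−1)/(n(m−1)+2)} ≤ 1. -/
open MeasureTheory Set

/-!
Fix `t` and a radius `R ≤ 1`. Splitting the Green integral of the pointwise estimate at the ball
`B_R(x₀)`, and bounding `u` by `‖u(t)‖_∞` on the ball, gives
`‖u(t)‖_∞ ^ m ≤ (C / t) (C R² ‖u(t)‖_∞ + C R^(2-n) N₀)`.
The radius `R^(n(m-1)+2) = t N₀^(m-1)`, admissible while `t ≤ N₀^(-(m-1))`, makes the two
coefficients `C² λ^(m-1)` and `C² λ^m` for `λ = t^(-n/θ) N₀^(2/θ)`, `θ = n(m-1)+2`; and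
`x^m ≤ A λ^(m-1) x + A λ^m` is homogeneous in `(x, λ)`, so it forces `x ≤ const · λ`.
-/

theorem le_one_add_rpow_inv_of_rpow_le {m A y : ℝ} (hm : 1 < m) (hA : 0 ≤ A) (hy : 0 ≤ y)
    (h : y ^ m ≤ A * y + A) : y ≤ 1 + (2 * A) ^ (m - 1)⁻¹ := by
  rcases le_or_gt y 1 with hy1 | hy1
  · linarith [Real.rpow_nonneg (by positivity : (0 : ℝ) ≤ 2 * A) (m - 1)⁻¹]
  have hy0 : 0 < y := one_pos.trans hy1
  have hpow : y ^ (m - 1) ≤ 2 * A := by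
    rw [Real.rpow_sub_one hy0.ne', div_le_iff₀ hy0]
    nlinarith
  have := (Real.le_rpow_inv_iff_of_pos hy (by positivity) (sub_pos.mpr hm)).mpr hpow
  linarith

theorem le_mul_of_rpow_le_homogeneous {m A x lam : ℝ} (hm : 1 < m) (hA : 0 ≤ A) (hx : 0 ≤ x)
    (hlam : 0 < lam) (h : x ^ m ≤ A * lam ^ (m - 1) * x + A * lam ^ m) :
    x ≤ (1 + (2 * A) ^ (m - 1)⁻¹) * lam := by
  have hscaled : (x / lam) ^ m ≤ A * (x / lam) + A := by
    rw [Real.div_rpow hx hlam.le, div_le_iff₀ (Real.rpow_pos_of_pos hlam m)]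
    rw [Real.rpow_sub_one hlam.ne'] at h
    calc x ^ m ≤ A * (lam ^ m / lam) * x + A * lam ^ m := h
      _ = (A * (x / lam) + A) * lam ^ m := by field_simp
  have := le_one_add_rpow_inv_of_rpow_le hm hA (div_nonneg hx hlam.le) hscaled
  rwa [div_le_iff₀ hlam] at this

theorem integral_mul_le_mul_setIntegral_add {M : Type*} [MeasurableSpace M] {μ : Measure M}
    {f g : M → ℝ} {s : Set M} {L : ℝ} (hs : MeasurableSet s)
    (hfg : Integrable (fun x => f x * g x) μ) (hg : IntegrableOn g s μ) (hg0 : ∀ x, 0 ≤ g x)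
    (hfL : ∀ᵐ x ∂μ, f x ≤ L) :
    ∫ x, f x * g x ∂μ ≤ L * ∫ x in s, g x ∂μ + ∫ x in sᶜ, f x * g x ∂μ := by
  rw [← integral_add_compl hs hfg, ← integral_const_mul]
  gcongr ?_ + _
  refine integral_mono_ae hfg.integrableOn (hg.const_mul L) ?_
  filter_upwards [ae_restrict_of_ae hfL] with x hx
  exact mul_le_mul_of_nonneg_right hx (hg0 x)

theorem rpow_le_of_ae_rpow_le {M : Type*} [MeasurableSpace M] {μ : Measure M} {f : M → ℝ}
    {L D m : ℝ} (hm : 0 < m) (hf : ∀ x, 0 ≤ f x) (hL : 0 ≤ L)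
    (hleast : ∀ K, (∀ᵐ x ∂μ, f x ≤ K) → L ≤ K) (h : ∀ᵐ x ∂μ, f x ^ m ≤ D) : L ^ m ≤ D := by
  rcases lt_or_ge D 0 with hD | hD
  · -- then `μ = 0`, and `hleast` bounds `L` by `L - 1`
    have hvoid : ∀ᵐ x ∂μ, f x ≤ L - 1 := h.mono fun x hx =>
      absurd (hx.trans_lt hD) (Real.rpow_nonneg (hf x) m).not_gt
    linarith [hleast _ hvoid]
  rw [← Real.le_rpow_inv_iff_of_pos hL hD hm]
  refine hleast _ ?_
  filter_upwards [h] with x hx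
  exact (Real.le_rpow_inv_iff_of_pos (hf x) hD hm).mpr hx

theorem rpow_le_of_pointwise_green_estimate {M : Type*} [MeasurableSpace M] {μ : Measure M}
    {f : M → ℝ} {G : M → M → ℝ} {s : M → Set M} {L c A B m : ℝ} (hm : 0 < m) (hc : 0 ≤ c)
    (hf : ∀ x, 0 ≤ f x) (hG : ∀ x y, 0 ≤ G x y) (hL : 0 ≤ L) (hfL : ∀ᵐ x ∂μ, f x ≤ L)
    (hleast : ∀ K, (∀ᵐ x ∂μ, f x ≤ K) → L ≤ K) (hs : ∀ y, MeasurableSet (s y))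
    (hfG : ∀ y, Integrable (fun x => f x * G x y) μ)
    (hGs : ∀ y, IntegrableOn (fun x => G x y) (s y) μ)
    (hpt : ∀ᵐ y ∂μ, f y ^ m ≤ c * ∫ x, f x * G x y ∂μ)
    (hnear : ∀ y, ∫ x in s y, G x y ∂μ ≤ A)
    (hfar : ∀ y, ∫ x in (s y)ᶜ, f x * G x y ∂μ ≤ B) :
    L ^ m ≤ c * (L * A + B) := by
  refine rpow_le_of_ae_rpow_le hm hf hL hleast ?_
  filter_upwards [hpt] with y hy
  have hsplit := integral_mul_le_mul_setIntegral_add (hs y) (hfG y) (hGs y) (hG · y) hfL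
  calc f y ^ m ≤ c * ∫ x, f x * G x y ∂μ := hy
    _ ≤ c * (L * A + B) := by gcongr; linarith [mul_le_mul_of_nonneg_left (hnear y) hL, hfar y]

theorem optimal_radius_scaling {t N m n θ R lam : ℝ} (ht : 0 < t) (hN : 0 < N)
    (hθ : θ = n * (m - 1) + 2) (hθpos : 0 < θ) (hR : R = (t * N ^ (m - 1)) ^ θ⁻¹)
    (hlam : lam = t ^ (-(n / θ)) * N ^ (2 / θ)) :
    R ^ 2 / t = lam ^ (m - 1) ∧ R ^ (-(n - 2)) * N / t = lam ^ m := by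
  have hRpos : 0 < R := hR ▸ by positivity
  have hlampos : 0 < lam := hlam ▸ by positivity
  have hlogR : Real.log R = (Real.log t + (m - 1) * Real.log N) / θ := by
    rw [hR, Real.log_rpow (by positivity), Real.log_mul ht.ne' (by positivity),
      Real.log_rpow hN]
    ring
  have hloglam : Real.log lam = (-n * Real.log t + 2 * Real.log N) / θ := by
    rw [hlam, Real.log_mul (by positivity) (by positivity), Real.log_rpow ht, Real.log_rpow hN]
    ring
  constructor
  · refine Real.log_injOn_pos (mem_Ioi.mpr (by positivity))
      (mem_Ioi.mpr (Real.rpow_pos_of_pos hlampos _)) ?_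
    rw [Real.log_div (by positivity) ht.ne', Real.log_pow, Real.log_rpow hlampos, hlogR, hloglam]
    field_simp
    rw [hθ]
    ring
  · refine Real.log_injOn_pos (mem_Ioi.mpr (by positivity))
      (mem_Ioi.mpr (Real.rpow_pos_of_pos hlampos _)) ?_
    rw [Real.log_div (by positivity) ht.ne', Real.log_mul (by positivity) hN.ne',
      Real.log_rpow hRpos, Real.log_rpow hlampos, hlogR, hloglam]
    field_simp
    rw [hθ]
    ring

theorem stmt_17_general {M : Type*} [MetricSpace M] [MeasurableSpace M] [BorelSpace M]
    (μ : MeasureTheory.Measure M) (G : M → M → ℝ) (u : M → ℝ → ℝ)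
    (Ninf : ℝ → ℝ) (n : ℕ) (m C N₀ : ℝ)
    (hm : 1 < m) (hC : 0 < C) (hN₀ : 0 < N₀)
    (hu_nonneg : ∀ x t, 0 ≤ u x t)
    (hG_nonneg : ∀ x x₀, 0 ≤ G x x₀)
    (hNinf_nonneg : ∀ t, 0 ≤ Ninf t)
    (hNinf_bound : ∀ t, 0 < t → ∀ᵐ x ∂μ, u x t ≤ Ninf t)
    (hNinf_least : ∀ t K, 0 < t → (∀ᵐ x ∂μ, u x t ≤ K) → Ninf t ≤ K)
    (hint : ∀ (t : ℝ) (x₀ : M), 0 < t → MeasureTheory.Integrable (fun x => u x t * G x x₀) μ)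
    (hGint : ∀ (x₀ : M) (R : ℝ), 0 < R → R ≤ 1 →
      MeasureTheory.IntegrableOn (fun x => G x x₀) (Metric.ball x₀ R) μ)
    -- (a) fundamental pointwise estimate:
    (ha : ∀ t₀ : ℝ, 0 < t₀ → ∀ᵐ x₀ ∂μ,
      u x₀ t₀ ^ m ≤ C / t₀ * ∫ x, u x t₀ * G x x₀ ∂μ)
    -- (b) short-range Green bound:
    (hb : ∀ (x₀ : M) (R : ℝ), 0 < R → R ≤ 1 →
      (∫ x in Metric.ball x₀ R, G x x₀ ∂μ) ≤ C * R ^ 2)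
    -- (c) tail bound:
    (hc' : ∀ (t₀ : ℝ) (x₀ : M) (R : ℝ), 0 < t₀ → 0 < R → R ≤ 1 →
      (∫ x in (Metric.ball x₀ R)ᶜ, u x t₀ * G x x₀ ∂μ) ≤ C * R ^ (-((n : ℝ) - 2)) * N₀) :
    ∃ C' > (0 : ℝ), ∃ K > (0 : ℝ), ∀ t : ℝ, 0 < t → t ≤ K * N₀ ^ (-(m - 1)) →
      Ninf t ≤ C' * t ^ (-((n : ℝ) / ((m - 1) * n + 2))) *
        N₀ ^ (2 / ((n : ℝ) * (m - 1) + 2)) := by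
  have hm1 : 0 < m - 1 := sub_pos.mpr hm
  refine ⟨1 + (2 * C ^ 2) ^ (m - 1)⁻¹, by positivity, 1, one_pos, fun t ht htK => ?_⟩
  rw [mul_comm (m - 1) (n : ℝ), mul_assoc]
  set θ : ℝ := n * (m - 1) + 2
  set R := (t * N₀ ^ (m - 1)) ^ θ⁻¹
  obtain ⟨hnear, hfar⟩ := optimal_radius_scaling (R := R) ht hN₀ rfl (by positivity) rfl rfl
  have hR0 : 0 < R := by positivity
  have hR1 : R ≤ 1 := by
    rw [one_mul, Real.rpow_neg hN₀.le, inv_eq_one_div, le_div_iff₀ (by positivity)] at htK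
    exact Real.rpow_le_one (by positivity) htK (by positivity)
  have key := rpow_le_of_pointwise_green_estimate (s := (Metric.ball · R)) (by positivity)
    (by positivity : 0 ≤ C / t) (hu_nonneg · t) hG_nonneg (hNinf_nonneg t) (hNinf_bound t ht)
    (hNinf_least t · ht) (fun _ => measurableSet_ball) (hint t · ht) (hGint · R hR0 hR1)
    (ha t ht) (hb · R hR0 hR1) (hc' t · R ht hR0 hR1)
  refine le_mul_of_rpow_le_homogeneous hm (by positivity) (hNinf_nonneg t) (by positivity) ?_
  calc Ninf t ^ m
      ≤ C / t * (Ninf t * (C * R ^ 2) + C * R ^ (-((n : ℝ) - 2)) * N₀) := key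
    _ = C ^ 2 * (R ^ 2 / t) * Ninf t + C ^ 2 * (R ^ (-((n : ℝ) - 2)) * N₀ / t) := by ring
    _ = _ := by rw [hnear, hfar]

/-- abstract short-time smoothing: from the fundamental pointwise
inequality, the short-range bound `∫_{B_R(x₀)}G ≤ C R²` for `0 < R ≤ 1`, the tail bound
`∫_{M∖B_R(x₀)} u(·,t₀)G(·,x₀) dμ ≤ C R^{−(n−2)}‖u₀‖₁` for `0 < R ≤ 1`, and mass
nonexpansivity, one obtains `C', K > 0` with
`‖u(t)‖_∞ ≤ C' t^{−n/((m−1)n+2)} ‖u₀‖₁^{2/(n(m−1)+2)}` for `0 < t ≤ K ‖u₀‖₁^{−(m−1)}`. -/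
theorem stmt_17 {M : Type*} [MetricSpace M] [MeasurableSpace M] [BorelSpace M]
    (μ : MeasureTheory.Measure M) (G : M → M → ℝ) (u : M → ℝ → ℝ)
    (Ninf : ℝ → ℝ) (n : ℕ) (m C N₀ : ℝ)
    (hn : 3 ≤ n) (hm : 1 < m) (hC : 0 < C) (hN₀ : 0 < N₀)
    (hu_nonneg : ∀ x t, 0 ≤ u x t)
    (hG_nonneg : ∀ x x₀, 0 ≤ G x x₀)
    (hNinf_nonneg : ∀ t, 0 ≤ Ninf t)
    (hNinf_bound : ∀ t, 0 < t → ∀ᵐ x ∂μ, u x t ≤ Ninf t)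
    (hNinf_least : ∀ t K, 0 < t → (∀ᵐ x ∂μ, u x t ≤ K) → Ninf t ≤ K)
    (hint : ∀ (t : ℝ) (x₀ : M), 0 < t → MeasureTheory.Integrable (fun x => u x t * G x x₀) μ)
    (hGint : ∀ (x₀ : M) (R : ℝ), 0 < R → R ≤ 1 →
      MeasureTheory.IntegrableOn (fun x => G x x₀) (Metric.ball x₀ R) μ)
    -- (a) fundamental pointwise estimate:
    (ha : ∀ t₀ : ℝ, 0 < t₀ → ∀ᵐ x₀ ∂μ,
      u x₀ t₀ ^ m ≤ C / t₀ * ∫ x, u x t₀ * G x x₀ ∂μ)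
    -- (b) short-range Green bound:
    (hb : ∀ (x₀ : M) (R : ℝ), 0 < R → R ≤ 1 →
      (∫ x in Metric.ball x₀ R, G x x₀ ∂μ) ≤ C * R ^ 2)
    -- (c) tail bound:
    (hc' : ∀ (t₀ : ℝ) (x₀ : M) (R : ℝ), 0 < t₀ → 0 < R → R ≤ 1 →
      (∫ x in (Metric.ball x₀ R)ᶜ, u x t₀ * G x x₀ ∂μ) ≤ C * R ^ (-((n : ℝ) - 2)) * N₀)
    -- (d) mass nonexpansivity:
    (hd : ∀ t : ℝ, 0 < t → (∫ x, u x t ∂μ) ≤ N₀) :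
    ∃ C' > (0 : ℝ), ∃ K > (0 : ℝ), ∀ t : ℝ, 0 < t → t ≤ K * N₀ ^ (-(m - 1)) →
      Ninf t ≤ C' * t ^ (-((n : ℝ) / ((m - 1) * n + 2))) *
        N₀ ^ (2 / ((n : ℝ) * (m - 1) + 2)) :=
  stmt_17_general μ G u Ninf n m C N₀ hm hC hN₀ hu_nonneg hG_nonneg hNinf_nonneg hNinf_bound
    hNinf_least hint hGint ha hb hc'
end

section
/- Let m > 1 and suppose that for a.e. x₀ and all t₀ > 0: u(x₀,t₀)^m ≤ (C/t₀)∫_M u(x,t₀)G(x,x₀)dμ(x), that ∫_{B_{R₀}(x₀)}G(·,x₀)dμ ≤ C, that ∫_{M∖B_{R₀}(x₀)} u(·,t₀)G(·,x₀)dμ ≤ ‖u(t₀)‖_{L¹_{x₀,G}}, and the L¹_G-stability ‖u(t)‖_{L¹_{x₀,G}} ≤ C‖u₀‖_{L¹_{x₀,G}}. Then Young's inequality gives ‖u(t)‖_{L^∞} ≤ C'(t^{−m/(m−1)} + t^{−1}‖u₀‖_{L¹_G})^{1/m}, and consequently ‖u(t)‖_{L^∞} ≤ C'' t^{−1/m}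 ‖u₀‖_{L¹_G}^{1/m} for every t ≥ ‖u₀‖_{L¹_G}^{−(m−1)}. -/
open MeasureTheory Set

/-!
Splitting `∫ u(·,t) G(·,x₀)` into the ball `B_{R₀}(x₀)`, where `u ≤ ‖u(t)‖_∞` and `∫ G ≤ C`, and
its complement, where the weighted norm and `L¹_G` stability apply, turns the pointwise estimate
into `‖u(t)‖_∞^m ≤ (C²/t) ‖u(t)‖_∞ + C² N₀ / t`. Young's inequality with exponents `m` and
`m/(m-1)` absorbs the linear term, and for `t ≥ N₀^{-(m-1)}` the term `t^{-m/(m-1)}` is dominated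
by `N₀/t`.
-/

namespace Real

/-- Absorption by Young's inequality with the exponents `m` and `m / (m - 1)`. -/
theorem rpow_le_of_rpow_le_mul_add {a b c m : ℝ} (hm : 1 < m) (ha : 0 ≤ a) (hb : 0 ≤ b)
    (h : a ^ m ≤ b * a + c) : a ^ m ≤ b ^ (m / (m - 1)) + m / (m - 1) * c := by
  set q := m / (m - 1) with hq
  have hpq : m.HolderConjugate q := (holderConjugate_iff_eq_conjExponent hm).2 hq
  have hyoung : a * b ≤ a ^ m / m + b ^ q / q := young_inequality_of_nonneg ha hb hpq
  have hsplit : a ^ m = a ^ m / m + a ^ m / q := by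
    rw [div_eq_mul_inv, div_eq_mul_inv, ← mul_add, hpq.inv_add_inv_eq_one, mul_one]
  have hq0 : 0 < q := hpq.symm.pos
  have habsorb : a ^ m / q ≤ b ^ q / q + c := by linarith [mul_comm a b]
  calc a ^ m = q * (a ^ m / q) := by field_simp
    _ ≤ q * (b ^ q / q + c) := by gcongr
    _ = b ^ q + q * c := by field_simp

theorem le_rpow_mul_rpow_of_rpow_le_div_mul_add {a b N t m : ℝ} (hm : 1 < m) (ha : 0 ≤ a)
    (hb : 0 ≤ b) (hN : 0 ≤ N) (ht : 0 < t) (h : a ^ m ≤ b / t * a + b * N / t) :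
    a ≤ (b ^ (m / (m - 1)) + m / (m - 1) * b) ^ (1 / m) *
      (t ^ (-(m / (m - 1))) + N / t) ^ (1 / m) := by
  set q := m / (m - 1)
  have hq0 : 0 ≤ q := div_nonneg (by linarith) (by linarith)
  have hscale : (b / t) ^ q = b ^ q * t ^ (-q) := by
    rw [div_rpow hb ht.le, rpow_neg ht.le, div_eq_mul_inv]
  have hyoung : a ^ m ≤ (b / t) ^ q + q * (b * N / t) :=
    rpow_le_of_rpow_le_mul_add hm ha (by positivity) h
  have hpow : a ^ m ≤ (b ^ q + q * b) * (t ^ (-q) + N / t) := by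
    have : 0 ≤ b ^ q * (N / t) + q * b * t ^ (-q) := by positivity
    calc a ^ m ≤ b ^ q * t ^ (-q) + q * b * (N / t) := by
          rw [← hscale, mul_assoc, ← mul_div_assoc]; exact hyoung
      _ ≤ (b ^ q + q * b) * (t ^ (-q) + N / t) := by nlinarith
  rw [← mul_rpow (by positivity) (by positivity), one_div]
  exact (le_rpow_inv_iff_of_pos ha (by positivity) (by linarith)).2 hpow

theorem rpow_add_div_le_of_rpow_le {m N t : ℝ} (hm : 1 < m) (hN : 0 < N)
    (ht : N ^ (-(m - 1)) ≤ t) :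
    (t ^ (-(m / (m - 1))) + N / t) ^ (1 / m) ≤ 2 ^ (1 / m) * t ^ (-(1 / m)) * N ^ (1 / m) := by
  have ht0 : 0 < t := (rpow_pos_of_pos hN _).trans_le ht
  have hroot : t ^ (-(m - 1)⁻¹) ≤ N := by
    calc t ^ (-(m - 1)⁻¹) ≤ (N ^ (-(m - 1))) ^ (-(m - 1)⁻¹) :=
          rpow_le_rpow_of_nonpos (rpow_pos_of_pos hN _) ht
            (neg_nonpos.2 (inv_nonneg.2 (by linarith)))
      _ = N := by
          rw [← rpow_mul hN.le, neg_mul_neg, mul_inv_cancel₀ (by linarith), rpow_one]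
  have hsplit : t ^ (-(m / (m - 1))) = t ^ (-(m - 1)⁻¹) / t := by
    have hm1 : m - 1 ≠ 0 := sub_ne_zero.2 hm.ne'
    rw [← rpow_sub_one ht0.ne']
    congr 1
    field_simp
    ring
  have hdominated : t ^ (-(m / (m - 1))) + N / t ≤ 2 * (N / t) := by
    rw [hsplit]
    linarith [div_le_div_of_nonneg_right hroot ht0.le]
  calc (t ^ (-(m / (m - 1))) + N / t) ^ (1 / m) ≤ (2 * (N / t)) ^ (1 / m) := by
        gcongr
    _ = 2 ^ (1 / m) * t ^ (-(1 / m)) * N ^ (1 / m) := by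
        rw [mul_rpow zero_le_two (by positivity), div_rpow hN.le ht0.le, rpow_neg ht0.le]
        ring

end Real

namespace MeasureTheory

variable {α : Type*} [MeasurableSpace α] {μ : Measure α}

theorem integral_mul_le_of_ae_le {f g : α → ℝ} {s : Set α} {K : ℝ} (hs : MeasurableSet s)
    (hfg : Integrable (fun x ↦ f x * g x) μ) (hg : IntegrableOn g s μ) (hg0 : ∀ x, 0 ≤ g x)
    (hf : ∀ᵐ x ∂μ, f x ≤ K) :
    ∫ x, f x * g x ∂μ ≤ K * ∫ x in s, g x ∂μ + ∫ x in sᶜ, f x * g x ∂μ := by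
  rw [← integral_add_compl hs hfg, ← integral_const_mul]
  gcongr ?_ + _
  refine integral_mono_ae hfg.integrableOn (hg.const_mul K) ?_
  filter_upwards [ae_restrict_of_ae hf] with x hx
  exact mul_le_mul_of_nonneg_right hx (hg0 x)

theorem rpow_le_of_ae_rpow_le {f : α → ℝ} {N X m : ℝ} (hm : 0 < m) (hf : ∀ x, 0 ≤ f x)
    (hN : 0 ≤ N) (hX : 0 ≤ X) (hleast : ∀ K, (∀ᵐ x ∂μ, f x ≤ K) → N ≤ K)
    (h : ∀ᵐ x ∂μ, f x ^ m ≤ X) : N ^ m ≤ X := by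
  rw [← Real.le_rpow_inv_iff_of_pos hN hX hm]
  refine hleast _ ?_
  filter_upwards [h] with x hx
  exact (Real.le_rpow_inv_iff_of_pos (hf x) hX hm).2 hx

end MeasureTheory

theorem stmt_18_general {M : Type*} [MetricSpace M] [MeasurableSpace M] [BorelSpace M]
    (μ : MeasureTheory.Measure M) (G : M → M → ℝ) (u : M → ℝ → ℝ)
    (NG : ℝ → M → ℝ) (Ninf : ℝ → ℝ) (m C R₀ N₀ : ℝ)
    (hm : 1 < m) (hC : 0 < C) (hN₀ : 0 < N₀)
    (hu_nonneg : ∀ x t, 0 ≤ u x t)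
    (hG_nonneg : ∀ x x₀, 0 ≤ G x x₀)
    (hNinf_nonneg : ∀ t, 0 ≤ Ninf t)
    (hNinf_bound : ∀ t, 0 < t → ∀ᵐ x ∂μ, u x t ≤ Ninf t)
    (hNinf_least : ∀ t K, 0 < t → (∀ᵐ x ∂μ, u x t ≤ K) → Ninf t ≤ K)
    (hint : ∀ (t : ℝ) (x₀ : M), 0 < t → MeasureTheory.Integrable (fun x => u x t * G x x₀) μ)
    (hGint : ∀ x₀ : M,
      MeasureTheory.IntegrableOn (fun x => G x x₀) (Metric.ball x₀ R₀) μ)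
    -- (a) fundamental pointwise estimate:
    (ha : ∀ t₀ : ℝ, 0 < t₀ → ∀ᵐ x₀ ∂μ,
      u x₀ t₀ ^ m ≤ C / t₀ * ∫ x, u x t₀ * G x x₀ ∂μ)
    -- (b) Green bound on `B_{R₀}`:
    (hb : ∀ x₀ : M, (∫ x in Metric.ball x₀ R₀, G x x₀ ∂μ) ≤ C)
    -- (c) tail bound by the weighted norm:
    (hc' : ∀ (t₀ : ℝ) (x₀ : M), 0 < t₀ →
      (∫ x in (Metric.ball x₀ R₀)ᶜ, u x t₀ * G x x₀ ∂μ) ≤ NG t₀ x₀)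
    -- (d) `L¹_G` stability:
    (hd : ∀ (t : ℝ) (x₀ : M), 0 < t → NG t x₀ ≤ C * N₀) :
    (∃ C' > (0 : ℝ), ∀ t : ℝ, 0 < t →
      Ninf t ≤ C' * (t ^ (-(m / (m - 1))) + N₀ / t) ^ (1 / m)) ∧
    ∃ C'' > (0 : ℝ), ∀ t : ℝ, N₀ ^ (-(m - 1)) ≤ t →
      Ninf t ≤ C'' * t ^ (-(1 / m)) * N₀ ^ (1 / m) := by
  have hm0 : 0 < m := one_pos.trans hm
  have hiterate : ∀ t, 0 < t → Ninf t ^ m ≤ C ^ 2 / t * Ninf t + C ^ 2 * N₀ / t := by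
    intro t ht
    have hweighted : ∀ x₀, ∫ x, u x t * G x x₀ ∂μ ≤ Ninf t * C + C * N₀ := fun x₀ ↦
      (integral_mul_le_of_ae_le Metric.isOpen_ball.measurableSet (hint t x₀ ht) (hGint x₀)
        (hG_nonneg · x₀) (hNinf_bound t ht)).trans
        (add_le_add (mul_le_mul_of_nonneg_left (hb x₀) (hNinf_nonneg t))
          ((hc' t x₀ ht).trans (hd t x₀ ht)))
    have hX : 0 ≤ C / t * (Ninf t * C + C * N₀) := by
      have := hNinf_nonneg t
      positivity
    calc Ninf t ^ m ≤ C / t * (Ninf t * C + C * N₀) := by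
          refine rpow_le_of_ae_rpow_le hm0 (hu_nonneg · t) (hNinf_nonneg t) hX
            (hNinf_least t · ht) ?_
          filter_upwards [ha t ht] with x₀ hx₀
          exact hx₀.trans (by gcongr; exact hweighted x₀)
      _ = C ^ 2 / t * Ninf t + C ^ 2 * N₀ / t := by ring
  set C' := (C ^ 2) ^ (m / (m - 1)) + m / (m - 1) * C ^ 2
  have hC' : 0 < C' := by
    have : 0 < m / (m - 1) := div_pos hm0 (by linarith)
    positivity
  have hsmoothing : ∀ t, 0 < t →
      Ninf t ≤ C' ^ (1 / m) * (t ^ (-(m / (m - 1))) + N₀ / t) ^ (1 / m) :=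
    fun t ht ↦ Real.le_rpow_mul_rpow_of_rpow_le_div_mul_add hm (hNinf_nonneg t) (sq_nonneg C)
      hN₀.le ht (hiterate t ht)
  refine ⟨⟨C' ^ (1 / m), by positivity, hsmoothing⟩, C' ^ (1 / m) * 2 ^ (1 / m), by positivity,
    fun t ht ↦ ?_⟩
  have ht0 : 0 < t := (Real.rpow_pos_of_pos hN₀ _).trans_le ht
  calc Ninf t ≤ C' ^ (1 / m) * (t ^ (-(m / (m - 1))) + N₀ / t) ^ (1 / m) := hsmoothing t ht0
    _ ≤ C' ^ (1 / m) * (2 ^ (1 / m) * t ^ (-(1 / m)) * N₀ ^ (1 / m)) := by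
        gcongr
        exact Real.rpow_add_div_le_of_rpow_le hm hN₀ ht
    _ = C' ^ (1 / m) * 2 ^ (1 / m) * t ^ (-(1 / m)) * N₀ ^ (1 / m) := by ring

/-- abstract `L¹_G` smoothing: from the fundamental pointwise inequality,
`∫_{B_{R₀}(x₀)}G ≤ C`, the tail bound by the weighted norm
`∫_{M∖B_{R₀}(x₀)} u(·,t₀)G(·,x₀)dμ ≤ ‖u(t₀)‖_{L¹_{x₀,G}}`, and the stability
`‖u(t)‖_{L¹_{x₀,G}} ≤ C‖u₀‖_{L¹_G}`, Young's inequality gives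
`‖u(t)‖_∞ ≤ C'(t^{−m/(m−1)} + ‖u₀‖_{L¹_G}/t)^{1/m}`, and consequently
`‖u(t)‖_∞ ≤ C'' t^{−1/m}‖u₀‖_{L¹_G}^{1/m}` for every `t ≥ ‖u₀‖_{L¹_G}^{−(m−1)}`. -/
theorem stmt_18 {M : Type*} [MetricSpace M] [MeasurableSpace M] [BorelSpace M]
    (μ : MeasureTheory.Measure M) (G : M → M → ℝ) (u : M → ℝ → ℝ)
    (NG : ℝ → M → ℝ) (Ninf : ℝ → ℝ) (m C R₀ N₀ : ℝ)
    (hm : 1 < m) (hC : 0 < C) (hR₀ : 1 ≤ R₀) (hN₀ : 0 < N₀)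
    (hu_nonneg : ∀ x t, 0 ≤ u x t)
    (hG_nonneg : ∀ x x₀, 0 ≤ G x x₀)
    (hNinf_nonneg : ∀ t, 0 ≤ Ninf t)
    (hNinf_bound : ∀ t, 0 < t → ∀ᵐ x ∂μ, u x t ≤ Ninf t)
    (hNinf_least : ∀ t K, 0 < t → (∀ᵐ x ∂μ, u x t ≤ K) → Ninf t ≤ K)
    (hint : ∀ (t : ℝ) (x₀ : M), 0 < t → MeasureTheory.Integrable (fun x => u x t * G x x₀) μ)
    (hGint : ∀ x₀ : M,
      MeasureTheory.IntegrableOn (fun x => G x x₀) (Metric.ball x₀ R₀) μ)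
    -- (a) fundamental pointwise estimate:
    (ha : ∀ t₀ : ℝ, 0 < t₀ → ∀ᵐ x₀ ∂μ,
      u x₀ t₀ ^ m ≤ C / t₀ * ∫ x, u x t₀ * G x x₀ ∂μ)
    -- (b) Green bound on `B_{R₀}`:
    (hb : ∀ x₀ : M, (∫ x in Metric.ball x₀ R₀, G x x₀ ∂μ) ≤ C)
    -- (c) tail bound by the weighted norm:
    (hc' : ∀ (t₀ : ℝ) (x₀ : M), 0 < t₀ →
      (∫ x in (Metric.ball x₀ R₀)ᶜ, u x t₀ * G x x₀ ∂μ) ≤ NG t₀ x₀)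
    -- (d) `L¹_G` stability:
    (hd : ∀ (t : ℝ) (x₀ : M), 0 < t → NG t x₀ ≤ C * N₀) :
    (∃ C' > (0 : ℝ), ∀ t : ℝ, 0 < t →
      Ninf t ≤ C' * (t ^ (-(m / (m - 1))) + N₀ / t) ^ (1 / m)) ∧
    ∃ C'' > (0 : ℝ), ∀ t : ℝ, N₀ ^ (-(m - 1)) ≤ t →
      Ninf t ≤ C'' * t ^ (-(1 / m)) * N₀ ^ (1 / m) :=
  stmt_18_general μ G u NG Ninf m C R₀ N₀ hm hC hN₀ hu_nonneg hG_nonneg hNinf_nonneg hNinf_bound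
    hNinf_least hint hGint ha hb hc' hd
end
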